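/- arXiv:1709.02785 — 7 statements merged into one kernel-verified Lean document; each statement's English description precedes it below -/
import Mathlib

section
/- For every matrix ρ ∈ M_d(ℂ), one has the teleportation identity ρ ⊗ Φ = (1/d²) Σ_{j,k,j',k'=0}^{d-1} |φ_{j,k}⟩⟨φ_{j',k'}| ⊗ (T_{j,k}^* ρ T_{j',k'}), an equality of matrices in M_d(ℂ) ⊗ M_{d²}(ℂ) (Kronecker products), where |φ_{j,k}⟩⟨φ_{j',k'}| ∈ M_{d²}(ℂ) is the rank-one operator sending x to ⟨φ_{j',k'}, x⟩·φ_{j,k}, and on the left side Φ occupies the last two tensor factors. -/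
/-!
Fix the entry ((a, b, c), (a', b', c')). On the right the quadruple sum factorises as
`A ρ A'ᴴ` evaluated at (c, c'), where `A = ∑_{j,k} φ_{j,k}(a, b) T_{j,k}ᴴ`. Summing over `k` pins
`k = a - b`, and orthogonality of the characters `j ↦ ω^{j s}` then collapses `A` to
`√d · e_{b a}`. Hence the entry is `d⁻² · d · ρ_{a a'} [b = c] [b' = c']`, which is the
corresponding entry of `ρ ⊗ Φ`.
-/

open Matrix Complex Kronecker

noncomputable section

/-- ω = exp(2πi/d). -/
def pauliOmega (d : ℕ) : ℂ := Complex.exp (2 * Real.pi * Complex.I / d)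

/-- The generalized Pauli matrix X, with X e_j = ω^j e_j. -/
def pauliX (d : ℕ) : Matrix (Fin d) (Fin d) ℂ :=
  Matrix.diagonal fun j => pauliOmega d ^ (j : ℕ)

/-- The generalized Pauli matrix Z, with Z e_j = e_{j+1 (mod d)}. -/
def pauliZ (d : ℕ) [NeZero d] : Matrix (Fin d) (Fin d) ℂ :=
  Matrix.of fun a b => if a = b + 1 then 1 else 0

/-- T_{j,k} = X^j Z^k. -/
def pauliT (d : ℕ) [NeZero d] (j k : ℕ) : Matrix (Fin d) (Fin d) ℂ :=
  pauliX d ^ j * pauliZ d ^ k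

/-- The coordinates of the maximally entangled vector φ_{j,k} = (T_{j,k} ⊗ I)φ. -/
def phiFun (d : ℕ) [NeZero d] (j k : Fin d) : Fin d × Fin d → ℂ :=
  fun p => if p.1 = p.2 + k then (Real.sqrt d : ℂ)⁻¹ * pauliOmega d ^ ((j : ℕ) * (p.1 : ℕ)) else 0

/-- The density matrix Φ = |φ⟩⟨φ| = (1/d) Σ_{j,k} e_{jk} ⊗ e_{jk} of the maximally
entangled state, as a matrix in M_d(ℂ) ⊗ M_d(ℂ) via the Kronecker product. -/
def maxEntangled (d : ℕ) : Matrix (Fin d × Fin d) (Fin d × Fin d) ℂ :=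
  (d : ℂ)⁻¹ • ∑ j : Fin d, ∑ k : Fin d,
    (Matrix.single j k (1 : ℂ)) ⊗ₖ (Matrix.single j k (1 : ℂ))

/-- The rank-one operator |φ_{j,k}⟩⟨φ_{j',k'}| ∈ M_{d²}(ℂ), sending x to ⟨φ_{j',k'}, x⟩·φ_{j,k}. -/
def phiOuter (d : ℕ) [NeZero d] (j k j' k' : Fin d) :
    Matrix (Fin d × Fin d) (Fin d × Fin d) ℂ :=
  Matrix.vecMulVec (phiFun d j k) (fun q => star (phiFun d j' k' q))

theorem IsPrimitiveRoot.sum_pow_mul_star_pow {ζ : ℂ} {n : ℕ} (h : IsPrimitiveRoot ζ n)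
    (a s : Fin n) :
    ∑ j : Fin n, ζ ^ ((j : ℕ) * a) * star (ζ ^ ((j : ℕ) * s)) = if a = s then (n : ℂ) else 0 := by
  have hn : n ≠ 0 := a.pos.ne'
  have hstar : star ζ = ζ⁻¹ := (Complex.inv_eq_conj (h.norm'_eq_one hn)).symm
  set η := ζ ^ (a : ℕ) * (ζ ^ (s : ℕ))⁻¹
  have hterm (j : ℕ) : ζ ^ (j * a) * star (ζ ^ (j * s)) = η ^ j := by
    rw [star_pow, hstar, inv_pow, mul_pow, inv_pow, ← pow_mul, ← pow_mul,
      mul_comm (a : ℕ), mul_comm (s : ℕ)]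
  have hζ0 : ζ ≠ 0 := h.ne_zero hn
  have hη_one : η = 1 ↔ a = s := by
    rw [mul_inv_eq_one₀ (pow_ne_zero _ hζ0), Fin.ext_iff]
    exact ⟨fun e => h.pow_inj a.isLt s.isLt e, fun e => e ▸ rfl⟩
  simp_rw [hterm]
  rw [Fin.sum_univ_eq_sum_range (η ^ ·)]
  split_ifs with has
  · simp [hη_one.2 has]
  · have hηn : η ^ n = 1 := by
      rw [← hterm, pow_mul, pow_mul, h.pow_eq_one, one_pow, one_pow, star_one, one_mul]
    rw [geom_sum_eq (mt hη_one.1 has), hηn, sub_self, zero_div]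

theorem pauliOmega_isPrimitiveRoot (d : ℕ) [NeZero d] : IsPrimitiveRoot (pauliOmega d) d :=
  Complex.isPrimitiveRoot_exp d (NeZero.ne d)

open Fin.NatCast in
theorem pauliZ_pow_apply (d : ℕ) [NeZero d] (k : ℕ) (a b : Fin d) :
    (pauliZ d ^ k) a b = if a = b + (k : Fin d) then 1 else 0 := by
  induction k generalizing a with
  | zero => simp [Matrix.one_apply]
  | succ k ih =>
    have hshift (c : Fin d) : a = c + 1 ↔ c = a - 1 := by rw [eq_sub_iff_add_eq, eq_comm]
    simp only [pow_succ', mul_apply, ih]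
    simp only [pauliZ, of_apply, ite_mul, one_mul, zero_mul, hshift, Finset.sum_ite_eq',
      Finset.mem_univ, if_true, sub_eq_iff_eq_add, Nat.cast_succ, add_assoc]

theorem pauliX_pow (d j : ℕ) :
    pauliX d ^ j = diagonal fun s : Fin d => pauliOmega d ^ (j * (s : ℕ)) := by
  simp only [pauliX, diagonal_pow, Pi.pow_def, ← pow_mul, mul_comm]

theorem pauliT_apply (d : ℕ) [NeZero d] (j : ℕ) (k s c : Fin d) :
    pauliT d j k s c = if s = c + k then pauliOmega d ^ (j * (s : ℕ)) else 0 := by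
  rw [pauliT, pauliX_pow, diagonal_mul, pauliZ_pow_apply, Fin.cast_val_eq_self, mul_ite, mul_one,
    mul_zero]

theorem sum_phiFun_smul_conjTranspose_pauliT (d : ℕ) [NeZero d] (a b : Fin d) :
    ∑ j : Fin d, ∑ k : Fin d, phiFun d j k (a, b) • (pauliT d j k)ᴴ =
      ((√d : ℝ) : ℂ) • single b a 1 := by
  ext c s
  simp only [Matrix.sum_apply, Matrix.smul_apply, conjTranspose_apply, pauliT_apply, phiFun,
    smul_eq_mul]
  have hω := (pauliOmega_isPrimitiveRoot d).sum_pow_mul_star_pow a s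
  have hk (k : Fin d) : a = b + k ↔ k = a - b := by rw [eq_sub_iff_add_eq, add_comm, eq_comm]
  rw [Finset.sum_comm]
  simp only [hk, ite_mul, zero_mul, Finset.sum_ite_irrel, Finset.sum_const_zero,
    Finset.sum_ite_eq', Finset.mem_univ, if_true]
  simp only [apply_ite star, star_zero, mul_ite, mul_zero, Finset.sum_ite_irrel,
    Finset.sum_const_zero, mul_assoc, ← Finset.mul_sum, hω, single_apply]
  have hsqrt : ((√d : ℝ) : ℂ)⁻¹ * d = √d := by
    rw [inv_mul_eq_iff_eq_mul₀ (by simp [NeZero.ne d]), ← ofReal_mul,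
      Real.mul_self_sqrt d.cast_nonneg, ofReal_natCast]
  by_cases has : a = s
  · subst has
    have hbc : a = c + (a - b) ↔ b = c := by rw [← sub_eq_iff_eq_add, sub_sub_cancel]
    simp only [hbc, hsqrt, and_true, mul_one, if_true]
  · simp [has]

theorem sum_phiFun_mul_star_smul_sandwich (d : ℕ) [NeZero d] (ρ : Matrix (Fin d) (Fin d) ℂ)
    (a b a' b' : Fin d) :
    ∑ j : Fin d, ∑ k : Fin d, ∑ j' : Fin d, ∑ k' : Fin d,
        (phiFun d j k (a, b) * star (phiFun d j' k' (a', b'))) •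
          ((pauliT d j k)ᴴ * ρ * pauliT d j' k') =
      (d : ℂ) • single b b' (ρ a a') := by
  calc _ = (∑ j : Fin d, ∑ k : Fin d, phiFun d j k (a, b) • (pauliT d j k)ᴴ) * ρ *
        (∑ j' : Fin d, ∑ k' : Fin d, phiFun d j' k' (a', b') • (pauliT d j' k')ᴴ)ᴴ := by
        simp only [conjTranspose_sum, conjTranspose_smul, conjTranspose_conjTranspose,
          Finset.sum_mul]
        simp only [Finset.mul_sum, smul_mul_assoc, mul_smul_comm, smul_smul,
          mul_comm (star (phiFun _ _ _ _))]
    _ = (d : ℂ) • single b b' (ρ a a') := by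
        rw [sum_phiFun_smul_conjTranspose_pauliT, sum_phiFun_smul_conjTranspose_pauliT]
        simp only [conjTranspose_smul, conjTranspose_single, smul_mul_assoc, mul_smul_comm, smul_smul,
          single_mul_mul_single, star_one, one_mul, mul_one]
        rw [Complex.star_def, Complex.conj_ofReal, ← ofReal_mul, Real.mul_self_sqrt d.cast_nonneg,
          ofReal_natCast]

theorem maxEntangled_apply (d : ℕ) (b c b' c' : Fin d) :
    maxEntangled d (b, c) (b', c') = if b = c ∧ b' = c' then (d : ℂ)⁻¹ else 0 := by
  simp only [maxEntangled, Matrix.smul_apply, Matrix.sum_apply, kroneckerMap_apply, single_apply,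
    ite_and, mul_ite, mul_one, mul_zero, Finset.sum_ite_irrel, Finset.sum_ite_eq', Finset.mem_univ,
    ↓reduceIte, Finset.sum_const_zero, smul_eq_mul, eq_comm (a := c), eq_comm (a := c')]

theorem statement3_general (d : ℕ) [NeZero d] (ρ : Matrix (Fin d) (Fin d) ℂ) :
    ρ ⊗ₖ maxEntangled d =
      ((d : ℂ) ^ 2)⁻¹ • ∑ j : Fin d, ∑ k : Fin d, ∑ j' : Fin d, ∑ k' : Fin d,
        Matrix.reindex (Equiv.prodAssoc (Fin d) (Fin d) (Fin d))
          (Equiv.prodAssoc (Fin d) (Fin d) (Fin d))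
          (phiOuter d j k j' k' ⊗ₖ
            ((pauliT d (j : ℕ) (k : ℕ))ᴴ * ρ * pauliT d (j' : ℕ) (k' : ℕ))) := by
  ext ⟨a, b, c⟩ ⟨a', b', c'⟩
  have hsandwich := congr_fun (congr_fun (sum_phiFun_mul_star_smul_sandwich d ρ a b a' b') c) c'
  simp only [Matrix.sum_apply, Matrix.smul_apply, smul_eq_mul] at hsandwich
  simp only [kroneckerMap_apply, maxEntangled_apply, Matrix.smul_apply, Matrix.sum_apply,
    reindex_apply, submatrix_apply, Equiv.prodAssoc_symm_apply, phiOuter, vecMulVec_apply,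
    smul_eq_mul, hsandwich, single_apply]
  have hd0 : (d : ℂ) ≠ 0 := Nat.cast_ne_zero.mpr (NeZero.ne d)
  split_ifs
  · field_simp
  · simp

/-- The teleportation identity
ρ ⊗ Φ = (1/d²) Σ_{j,k,j',k'} |φ_{j,k}⟩⟨φ_{j',k'}| ⊗ (T_{j,k}^* ρ T_{j',k'}). -/
theorem statement3 (d : ℕ) (hd : 2 ≤ d) [NeZero d] (ρ : Matrix (Fin d) (Fin d) ℂ) :
    ρ ⊗ₖ maxEntangled d =
      ((d : ℂ) ^ 2)⁻¹ • ∑ j : Fin d, ∑ k : Fin d, ∑ j' : Fin d, ∑ k' : Fin d,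
        Matrix.reindex (Equiv.prodAssoc (Fin d) (Fin d) (Fin d))
          (Equiv.prodAssoc (Fin d) (Fin d) (Fin d))
          (phiOuter d j k j' k' ⊗ₖ
            ((pauliT d (j : ℕ) (k : ℕ))ᴴ * ρ * pauliT d (j' : ℕ) (k' : ℕ))) :=
  statement3_general d ρ
end
end

section
/- Let V ∈ M_{d²}(ℂ) be the matrix determined by V e_{(j,k)} = ω^{-jk} φ_{j,k} for 0 ≤ j,k ≤ d−1, where (e_{(j,k)}) is the standard basis of ℂ^d ⊗ ℂ^d. Then V is unitary and satisfies V^*(X ⊗ I_d)V = Z ⊗ X and V^*(Z ⊗ I_d)V = I_d ⊗ Z (Kronecker products). -/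
/-!
Column `(j, k)` of `V` is supported on the indices `(b + k, b)`, where its entry is `ω^{jb}/√d`:
the phase `ω^{-jk}` cancels the `k`-part of `ω^{j(b+k)}`. Orthonormality of the columns is then
the orthogonality of the characters `b ↦ ω^{jb}` of `ℤ/d`. Since `X ⊗ I` and `I ⊗ X` are diagonal
and `Z ⊗ I`, `I ⊗ Z` are permutation matrices, the intertwining relations
`(X ⊗ I) V = V (Z ⊗ X)` and `(Z ⊗ I) V = V (I ⊗ Z)` are entrywise identities between roots of
unity, and conjugating by the unitary `V` gives the claim.
-/

open Matrix Complex Kronecker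

noncomputable section

/-- The matrix V ∈ M_{d²}(ℂ) with V e_{(j,k)} = ω^{-jk} φ_{j,k}. -/
def teleportV (d : ℕ) [NeZero d] : Matrix (Fin d × Fin d) (Fin d × Fin d) ℂ :=
  Matrix.of fun p q =>
    pauliOmega d ^ (-((q.1 : ℤ) * (q.2 : ℤ))) * phiFun d q.1 q.2 p

section RootsOfUnity

variable {M : Type*} [Monoid M] {n : ℕ} {ζ : M}

lemma pow_finVal_add (h : ζ ^ n = 1) (a b : Fin n) :
    ζ ^ ((a + b : Fin n) : ℕ) = ζ ^ (a : ℕ) * ζ ^ (b : ℕ) := by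
  rw [Fin.val_add, ← pow_eq_pow_mod _ h, pow_add]

lemma pow_finVal_one [NeZero n] (h : ζ ^ n = 1) : ζ ^ ((1 : Fin n) : ℕ) = ζ := by
  rw [Fin.val_one', ← pow_eq_pow_mod _ h, pow_one]

lemma sum_pow_finVal {K : Type*} [DivisionRing K] [DecidableEq K] {ζ : K} (h : ζ ^ n = 1) :
    ∑ b : Fin n, ζ ^ (b : ℕ) = if ζ = 1 then (n : K) else 0 := by
  rw [Fin.sum_univ_eq_sum_range]
  split_ifs with hζ
  · simp [hζ]
  · rw [geom_sum_eq hζ, h, sub_self, zero_div]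

end RootsOfUnity

lemma PEquiv.toMatrix_toPEquiv_kronecker {l l' m m' α : Type*} [DecidableEq l'] [DecidableEq m']
    [MulZeroOneClass α] (σ : l ≃ l') (τ : m ≃ m') :
    σ.toPEquiv.toMatrix ⊗ₖ τ.toPEquiv.toMatrix = (σ.prodCongr τ).toPEquiv.toMatrix (α := α) := by
  ext ⟨a, b⟩ ⟨x, y⟩
  simp [kroneckerMap_apply, Prod.ext_iff, ← ite_and, and_comm]

lemma Matrix.conjTranspose_mul_mul_eq_of_mul_eq {n α : Type*} [Fintype n] [DecidableEq n]
    [Semiring α] [Star α] {U A B : Matrix n n α} (hU : Uᴴ * U = 1) (h : A * U = U * B) :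
    Uᴴ * A * U = B := by
  rw [Matrix.mul_assoc, h, ← Matrix.mul_assoc, hU, Matrix.one_mul]

variable {d : ℕ}

lemma pauliOmega_ne_zero : pauliOmega d ≠ 0 := Complex.exp_ne_zero _

lemma pauliX_kronecker_one :
    pauliX d ⊗ₖ (1 : Matrix (Fin d) (Fin d) ℂ) = diagonal fun p => pauliOmega d ^ (p.1 : ℕ) := by
  rw [pauliX, ← diagonal_one, diagonal_kronecker_diagonal]
  simp

lemma one_kronecker_pauliX :
    (1 : Matrix (Fin d) (Fin d) ℂ) ⊗ₖ pauliX d = diagonal fun q => pauliOmega d ^ (q.2 : ℕ) := by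
  rw [pauliX, ← diagonal_one, diagonal_kronecker_diagonal]
  simp

variable [NeZero d]

lemma isPrimitiveRoot_pauliOmega : IsPrimitiveRoot (pauliOmega d) d :=
  Complex.isPrimitiveRoot_exp d (NeZero.ne d)

lemma pauliOmega_pow_self : pauliOmega d ^ d = 1 := isPrimitiveRoot_pauliOmega.pow_eq_one

lemma star_pauliOmega : star (pauliOmega d) = (pauliOmega d)⁻¹ :=
  (Complex.inv_eq_conj (isPrimitiveRoot_pauliOmega.norm'_eq_one (NeZero.ne d))).symm

lemma pauliOmega_pow_pow_self (m : ℕ) : (pauliOmega d ^ m) ^ d = 1 := by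
  rw [pow_right_comm, pauliOmega_pow_self, one_pow]

lemma pauliZ_eq_toMatrix : pauliZ d = (Equiv.subRight (1 : Fin d)).toPEquiv.toMatrix := by
  ext a b
  simp [pauliZ, sub_eq_iff_eq_add]

lemma teleportV_apply (a b j k : Fin d) :
    teleportV d (a, b) (j, k) =
      if a = b + k then (√d : ℂ)⁻¹ * pauliOmega d ^ ((j : ℕ) * (b : ℕ)) else 0 := by
  simp only [teleportV, phiFun, of_apply]
  split_ifs with h
  · rw [h, pow_mul, pow_finVal_add (pauliOmega_pow_pow_self _), ← pow_mul, ← pow_mul,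
      _root_.zpow_neg, ← Nat.cast_mul, zpow_natCast]
    field_simp [pow_ne_zero _ pauliOmega_ne_zero]
  · rw [mul_zero]

lemma conjTranspose_teleportV_mul_teleportV_apply (j k j' k' : Fin d) :
    ((teleportV d)ᴴ * teleportV d) (j, k) (j', k') =
      if k = k' then (d : ℂ)⁻¹ *
        ∑ b : Fin d, ((pauliOmega d ^ (j : ℕ))⁻¹ * pauliOmega d ^ (j' : ℕ)) ^ (b : ℕ)
      else 0 := by
  rw [mul_apply, Fintype.sum_prod_type, Finset.sum_comm]
  simp only [conjTranspose_apply, teleportV_apply, apply_ite star, star_zero, star_mul',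
    ite_mul, zero_mul, mul_ite, mul_zero, Finset.sum_ite_eq', Finset.mem_univ, if_true,
    add_right_inj, eq_comm (a := k')]
  split_ifs
  · rw [Finset.mul_sum]
    refine Finset.sum_congr rfl fun b _ => ?_
    have hc : star ((√d : ℂ))⁻¹ * (√d : ℂ)⁻¹ = (d : ℂ)⁻¹ := by
      rw [star_inv₀, Complex.star_def, Complex.conj_ofReal, ← mul_inv, ← Complex.ofReal_mul,
        Real.mul_self_sqrt d.cast_nonneg, Complex.ofReal_natCast]
    rw [star_pow, star_pauliOmega, ← hc]
    ring
  · exact Finset.sum_const_zero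

lemma conjTranspose_teleportV_mul_teleportV : (teleportV d)ᴴ * teleportV d = 1 := by
  ext ⟨j, k⟩ ⟨j', k'⟩
  rw [conjTranspose_teleportV_mul_teleportV_apply, one_apply]
  have hζ : ((pauliOmega d ^ (j : ℕ))⁻¹ * pauliOmega d ^ (j' : ℕ)) ^ d = 1 := by
    rw [mul_pow, inv_pow, pauliOmega_pow_pow_self, pauliOmega_pow_pow_self, inv_one, one_mul]
  have hζ_eq_one : (pauliOmega d ^ (j : ℕ))⁻¹ * pauliOmega d ^ (j' : ℕ) = 1 ↔ j = j' := by
    rw [inv_mul_eq_one₀ (pow_ne_zero _ pauliOmega_ne_zero)]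
    exact ⟨fun h => Fin.ext (isPrimitiveRoot_pauliOmega.pow_inj j.isLt j'.isLt h),
      fun h => h ▸ rfl⟩
  rw [sum_pow_finVal hζ]
  by_cases hj : j = j' <;> by_cases hk : k = k' <;>
    simp [hj, hk, hζ_eq_one, NeZero.ne, pauliOmega_ne_zero]

lemma pauliZ_kronecker_one : pauliZ d ⊗ₖ (1 : Matrix (Fin d) (Fin d) ℂ) =
    ((Equiv.subRight 1).prodCongr (Equiv.refl _)).toPEquiv.toMatrix := by
  rw [pauliZ_eq_toMatrix, ← PEquiv.toMatrix_refl, ← Equiv.toPEquiv_refl,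
    PEquiv.toMatrix_toPEquiv_kronecker]

lemma one_kronecker_pauliZ : (1 : Matrix (Fin d) (Fin d) ℂ) ⊗ₖ pauliZ d =
    ((Equiv.refl _).prodCongr (Equiv.subRight 1)).toPEquiv.toMatrix := by
  rw [pauliZ_eq_toMatrix, ← PEquiv.toMatrix_refl, ← Equiv.toPEquiv_refl,
    PEquiv.toMatrix_toPEquiv_kronecker]

lemma pauliZ_kronecker_pauliX : pauliZ d ⊗ₖ pauliX d =
    (pauliZ d ⊗ₖ (1 : Matrix (Fin d) (Fin d) ℂ)) * diagonal fun q => pauliOmega d ^ (q.2 : ℕ) := by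
  rw [← one_kronecker_pauliX, ← mul_kronecker_mul, Matrix.mul_one, Matrix.one_mul]

lemma pauliX_kronecker_one_mul_teleportV :
    (pauliX d ⊗ₖ (1 : Matrix (Fin d) (Fin d) ℂ)) * teleportV d =
      teleportV d * (pauliZ d ⊗ₖ pauliX d) := by
  rw [pauliZ_kronecker_pauliX, ← Matrix.mul_assoc, pauliZ_kronecker_one, pauliX_kronecker_one,
    PEquiv.mul_toMatrix_toPEquiv]
  ext ⟨a, b⟩ ⟨j, k⟩
  simp only [diagonal_mul, mul_diagonal, submatrix_apply, id, Equiv.prodCongr_symm,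
    Equiv.prodCongr_apply, Prod.map, Equiv.subRight_symm_apply, Equiv.refl_symm, Equiv.refl_apply,
    teleportV_apply, mul_ite, ite_mul, mul_zero, zero_mul]
  split_ifs with h
  · subst h
    rw [pow_finVal_add pauliOmega_pow_self, pow_mul', pow_mul',
      pow_finVal_add (pauliOmega_pow_pow_self _), pow_finVal_one (pauliOmega_pow_pow_self _)]
    ring
  · rfl

lemma pauliZ_kronecker_one_mul_teleportV :
    (pauliZ d ⊗ₖ (1 : Matrix (Fin d) (Fin d) ℂ)) * teleportV d =
      teleportV d * ((1 : Matrix (Fin d) (Fin d) ℂ) ⊗ₖ pauliZ d) := by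
  rw [pauliZ_kronecker_one, one_kronecker_pauliZ, PEquiv.toMatrix_toPEquiv_mul,
    PEquiv.mul_toMatrix_toPEquiv]
  ext ⟨a, b⟩ ⟨j, k⟩
  simp [teleportV_apply, sub_eq_iff_eq_add, add_assoc]

theorem statement5_general (d : ℕ) [NeZero d] :
    teleportV d ∈ Matrix.unitaryGroup (Fin d × Fin d) ℂ ∧
    (teleportV d)ᴴ * (pauliX d ⊗ₖ (1 : Matrix (Fin d) (Fin d) ℂ)) * teleportV d =
      pauliZ d ⊗ₖ pauliX d ∧
    (teleportV d)ᴴ * (pauliZ d ⊗ₖ (1 : Matrix (Fin d) (Fin d) ℂ)) * teleportV d =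
      (1 : Matrix (Fin d) (Fin d) ℂ) ⊗ₖ pauliZ d :=
  ⟨mem_unitaryGroup_iff'.mpr conjTranspose_teleportV_mul_teleportV,
    conjTranspose_mul_mul_eq_of_mul_eq conjTranspose_teleportV_mul_teleportV
      pauliX_kronecker_one_mul_teleportV,
    conjTranspose_mul_mul_eq_of_mul_eq conjTranspose_teleportV_mul_teleportV
      pauliZ_kronecker_one_mul_teleportV⟩

/-- V is unitary and conjugates X ⊗ I to Z ⊗ X and Z ⊗ I to I ⊗ Z. -/
theorem statement5 (d : ℕ) (hd : 2 ≤ d) [NeZero d] :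
    teleportV d ∈ Matrix.unitaryGroup (Fin d × Fin d) ℂ ∧
    (teleportV d)ᴴ * (pauliX d ⊗ₖ (1 : Matrix (Fin d) (Fin d) ℂ)) * teleportV d =
      pauliZ d ⊗ₖ pauliX d ∧
    (teleportV d)ᴴ * (pauliZ d ⊗ₖ (1 : Matrix (Fin d) (Fin d) ℂ)) * teleportV d =
      (1 : Matrix (Fin d) (Fin d) ℂ) ⊗ₖ pauliZ d :=
  statement5_general d
end
end

section
/- Let H = ℓ²(ℤ × ℤ, ℂ) with standard orthonormal basis (e_{(m,n)})_{(m,n) ∈ ℤ×ℤ}. For j, k ∈ {0,1} let W_{j,k} be the operator on H determined on basis vectors by W_{j,k} e_{(m,n)} = (−1)^{j·χ(m+1) + k·χ(n+1)} e_{(m+1,n+1)}, where χ(t) = 1 if t ≥ 0 and χ(t) = 0 if t < 0. Let h_0 = Σ_{m<0} 2^{m/2} e_{(m,m)} (a norm-convergent sum) and h_1 = e_{(0,0)}. Then each W_{j,k} is a well-defined unitary operator, h_0 and h_1 are orthonormal unit vectors, and for all j, k ∈ {0,1}: ⟨h_0, W_{j,k} h_0⟩ = 1/√2 and ⟨h_1,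 W_{j,k} h_0⟩ = (−1)^{j−k}/√2. -/
/-
Each `W j k` maps the standard basis `e p` onto the orthonormal basis `± e (p + (1, 1))`, so it
extends to a unitary. On the diagonal it acts as the plain shift `e (m, m) ↦ e (m + 1, m + 1)` for
`m < -1`, and sends `e (-1, -1)` to `(-1) ^ (j + k) • e (0, 0)`. The coefficients `√2 ^ m` of `h₀`
grow by the factor `√2` from one diagonal point to the next, hence
`W j k h₀ = (h₀ + (-1) ^ (j + k) • e (0, 0)) / √2`, and both inner products follow from
`h₀ ⊥ e (0, 0)` and `‖h₀‖ ^ 2 = ∑_{m < 0} 2 ^ m = 1`.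
-/

open scoped InnerProductSpace lp ComplexConjugate

noncomputable section

section
variable {ι κ 𝕜 : Type*} [RCLike 𝕜]

theorem HilbertBasis.coe_default [DecidableEq ι] :
    ⇑(default : HilbertBasis ι 𝕜 ℓ²(ι, 𝕜)) = fun i => lp.single 2 i 1 :=
  funext fun i => ((default : HilbertBasis ι 𝕜 ℓ²(ι, 𝕜)).repr_symm_single i).symm

theorem lp.orthonormal_single [DecidableEq ι] :
    Orthonormal 𝕜 (fun i : ι => lp.single 2 i (1 : 𝕜)) :=
  HilbertBasis.coe_default (ι := ι) (𝕜 := 𝕜) ▸ HilbertBasis.orthonormal default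

theorem lp.dense_span_single [DecidableEq ι] :
    (Submodule.span 𝕜 (Set.range fun i : ι => lp.single 2 i (1 : 𝕜))).topologicalClosure =
      ⊤ :=
  HilbertBasis.coe_default (ι := ι) (𝕜 := 𝕜) ▸ HilbertBasis.dense_span default

theorem exists_linearIsometryEquiv_lp_single_eq_smul [DecidableEq ι] [DecidableEq κ]
    (σ : ι ≃ κ) (c : ι → 𝕜) (hc : ∀ i, ‖c i‖ = 1) :
    ∃ U : ℓ²(ι, 𝕜) ≃ₗᵢ[𝕜] ℓ²(κ, 𝕜), ∀ i, U (lp.single 2 i 1) = c i • lp.single 2 (σ i) 1 := by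
  set v : ι → ℓ²(κ, 𝕜) := fun i => c i • lp.single 2 (σ i) 1
  have hv : Orthonormal 𝕜 v := by
    have hw : Orthonormal 𝕜 (fun i => lp.single 2 (σ i) 1 : ι → ℓ²(κ, 𝕜)) :=
      lp.orthonormal_single.comp σ σ.injective
    rw [orthonormal_iff_ite] at hw ⊢
    intro i j
    simp only [v, inner_smul_left, inner_smul_right, ← mul_assoc]
    rw [hw i j]
    split_ifs with h
    · simp [h, RCLike.mul_conj, hc]
    · simp
  have hsp : ⊤ ≤ (Submodule.span 𝕜 (Set.range v)).topologicalClosure := by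
    rw [← lp.dense_span_single (𝕜 := 𝕜) (ι := κ)]
    refine Submodule.topologicalClosure_mono (Submodule.span_le.2 ?_)
    rintro _ ⟨k, rfl⟩
    have hck : c (σ.symm k) ≠ 0 := norm_ne_zero_iff.1 ((hc _).trans_ne one_ne_zero)
    have : lp.single 2 k (1 : 𝕜) = (c (σ.symm k))⁻¹ • v (σ.symm k) := by
      simp [v, smul_smul, hck]
    change (lp.single 2 k 1 : ℓ²(κ, 𝕜)) ∈ _
    rw [this]
    exact Submodule.smul_mem _ _ (Submodule.subset_span ⟨_, rfl⟩)
  refine ⟨(HilbertBasis.mk hv hsp).repr.symm, fun i => ?_⟩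
  rw [HilbertBasis.repr_symm_single, HilbertBasis.coe_mk]

theorem Orthonormal.hasSum_inner {E : Type*} [NormedAddCommGroup E] [InnerProductSpace 𝕜 E]
    {v : ι → E} (hv : Orthonormal 𝕜 v) {a b : ι → 𝕜} {x y : E}
    (hx : HasSum (fun i => a i • v i) x) (hy : HasSum (fun i => b i • v i) y) :
    HasSum (fun i => conj (a i) * b i) ⟪x, y⟫_𝕜 :=
  ((continuous_inner.tendsto (x, y)).comp (hx.prodMk_nhds hy)).congr fun s =>
    hv.inner_sum a b s

theorem Orthonormal.inner_right_of_hasSum {E : Type*} [NormedAddCommGroup E]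
    [InnerProductSpace 𝕜 E] {v : ι → E} (hv : Orthonormal 𝕜 v) {a : ι → 𝕜} {x : E}
    (hx : HasSum (fun i => a i • v i) x) (i : ι) : ⟪v i, x⟫_𝕜 = a i := by
  classical
  have h := hx.mapL (innerSL 𝕜 (v i))
  simp only [innerSL_apply_apply, inner_smul_right, orthonormal_iff_ite.1 hv, mul_ite, mul_one,
    mul_zero] at h
  simpa using h.unique (hasSum_single i fun j hj => if_neg (Ne.symm hj))

end

theorem hasSum_ite_neg_zpow {r : ℝ} (hr : 1 < r) :
    HasSum (fun m : ℤ => if m < 0 then r ^ m else 0) (r - 1)⁻¹ := by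
  have hr₀ : 0 < r := zero_lt_one.trans hr
  have hgeo := (hasSum_geometric_of_lt_one (inv_nonneg.2 hr₀.le)
    (inv_lt_one_of_one_lt₀ hr)).mul_right r⁻¹
  rw [← mul_inv, sub_mul, one_mul, inv_mul_cancel₀ hr₀.ne'] at hgeo
  have hneg : HasSum (fun n : ℕ => if -((n : ℤ) + 1) < 0 then r ^ (-((n : ℤ) + 1)) else 0)
      (r - 1)⁻¹ := by
    refine hgeo.congr_fun fun n => ?_
    rw [if_pos (by omega), zpow_neg, ← Nat.cast_succ, zpow_natCast, inv_pow, pow_succ,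
      mul_inv]
  simpa using (hasSum_zero (α := ℝ)).of_nat_of_neg_add_one
    (f := fun m : ℤ => if m < 0 then r ^ m else 0) hneg

theorem neg_one_zpow_natCast_sub {R : Type*} [DivisionRing R] (a b : ℕ) :
    (-1 : R) ^ ((a : ℤ) - b) = (-1) ^ (a + b) := by
  rw [zpow_sub₀ (neg_ne_zero.2 one_ne_zero), zpow_natCast, zpow_natCast, div_eq_mul_inv,
    ← inv_pow, inv_neg_one, pow_add]

namespace SignedShift

def sign (j k : Fin 2) (p : ℤ × ℤ) : ℂ :=
  (-1) ^ ((j : ℕ) * (if 0 ≤ p.1 + 1 then 1 else 0) + (k : ℕ) * (if 0 ≤ p.2 + 1 then 1 else 0))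

theorem norm_sign (j k : Fin 2) (p : ℤ × ℤ) : ‖sign j k p‖ = 1 := by
  simp [sign]

def coeff (m : ℤ) : ℂ := if m < 0 then ((√2 ^ m : ℝ) : ℂ) else 0

theorem norm_coeff (m : ℤ) : ‖coeff m‖ = if m < 0 then √2 ^ m else 0 := by
  unfold coeff
  split_ifs
  · rw [Complex.norm_real, Real.norm_of_nonneg (by positivity)]
  · exact norm_zero

theorem conj_coeff_mul_self (m : ℤ) :
    conj (coeff m) * coeff m = ((if m < 0 then (2 : ℝ) ^ m else 0 : ℝ) : ℂ) := by
  unfold coeff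
  split_ifs
  · rw [Complex.conj_ofReal, ← Complex.ofReal_mul, ← mul_zpow, Real.mul_self_sqrt zero_le_two]
  · simp

theorem coeff_sub_one_mul_sign (j k : Fin 2) (m : ℤ) :
    coeff (m - 1) * sign j k (m - 1, m - 1) =
      (√2 : ℂ)⁻¹ * (coeff m + if m = 0 then (-1) ^ ((j : ℕ) + k) else 0) := by
  rcases lt_trichotomy m 0 with hm | rfl | hm
  · have h2 : (√2 : ℝ) ≠ 0 := by positivity
    simp [coeff, sign, hm, hm.ne, show m - 1 < 0 by omega, show ¬ 0 ≤ m by omega,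
      zpow_sub_one₀ h2, mul_comm]
  · simp [coeff, sign]
  · simp [coeff, sign, hm.ne', show ¬ m - 1 < 0 by omega, show ¬ m < 0 by omega]

theorem orthonormal_single_diag :
    Orthonormal ℂ (fun m : ℤ => (lp.single 2 (m, m) 1 : ℓ²(ℤ × ℤ, ℂ))) :=
  lp.orthonormal_single.comp _ fun _ _ h => congrArg Prod.fst h

def h₀ : ℓ²(ℤ × ℤ, ℂ) := ∑' m : ℤ, coeff m • lp.single 2 (m, m) 1

theorem hasSum_h₀ : HasSum (fun m : ℤ => coeff m • lp.single 2 (m, m) 1) h₀ := by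
  refine Summable.hasSum (Summable.of_norm ?_)
  have h := (hasSum_ite_neg_zpow Real.one_lt_sqrt_two).summable
  refine h.congr fun m => ?_
  rw [norm_smul, lp.norm_single zero_lt_two, norm_one, mul_one, norm_coeff]

theorem hasSum_subtype_neg_h₀ :
    HasSum (fun m : {m : ℤ // m < 0} =>
      ((√2 ^ (m : ℤ) : ℝ) : ℂ) • (lp.single 2 ((m : ℤ), (m : ℤ)) 1 : ℓ²(ℤ × ℤ, ℂ))) h₀ := by
  have h := (hasSum_subtype_iff_of_support_subset (s := {m : ℤ | m < 0}) fun m hm => ?_).2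
    hasSum_h₀
  · exact h.congr_fun fun m => by simp [coeff, show (m : ℤ) < 0 from m.2]
  · by_contra h'
    simp [coeff, show ¬ m < 0 from h'] at hm

theorem inner_h₀_self : ⟪h₀, h₀⟫_ℂ = 1 := by
  have h := orthonormal_single_diag.hasSum_inner hasSum_h₀ hasSum_h₀
  simp_rw [conj_coeff_mul_self] at h
  have hgeom : HasSum (fun m : ℤ => if m < 0 then (2 : ℝ) ^ m else 0) 1 := by
    simpa [show (2 : ℝ) - 1 = 1 by norm_num] using hasSum_ite_neg_zpow one_lt_two
  exact (h.unique (Complex.hasSum_ofReal.2 hgeom)).trans Complex.ofReal_one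

theorem norm_h₀ : ‖h₀‖ = 1 := by
  have h : ‖h₀‖ ^ 2 = 1 := by
    rw [← inner_self_eq_norm_sq (𝕜 := ℂ), inner_h₀_self, RCLike.one_re]
  exact (pow_eq_one_iff_of_nonneg (norm_nonneg _) two_ne_zero).1 h

theorem inner_single_zero_h₀ : ⟪lp.single 2 (0, 0) 1, h₀⟫_ℂ = 0 :=
  (orthonormal_single_diag.inner_right_of_hasSum hasSum_h₀ 0).trans (by simp [coeff])

theorem map_h₀ {j k : Fin 2} (U : ℓ²(ℤ × ℤ, ℂ) →L[ℂ] ℓ²(ℤ × ℤ, ℂ))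
    (hU : ∀ m : ℤ,
      U (lp.single 2 (m, m) 1) = sign j k (m, m) • lp.single 2 (m + 1, m + 1) 1) :
    U h₀ = (√2 : ℂ)⁻¹ • (h₀ + (-1 : ℂ) ^ ((j : ℕ) + k) • lp.single 2 (0, 0) 1) := by
  have hUh₀ : HasSum (fun m : ℤ =>
      (coeff (m - 1) * sign j k (m - 1, m - 1)) • (lp.single 2 (m, m) 1 : ℓ²(ℤ × ℤ, ℂ)))
      (U h₀) := by
    rw [← (Equiv.addRight (1 : ℤ)).hasSum_iff]
    refine (hasSum_h₀.mapL U).congr_fun fun m => ?_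
    simp [hU, mul_smul]
  have hs := hasSum_single (f := fun m : ℤ =>
      (if m = 0 then (-1 : ℂ) ^ ((j : ℕ) + k) else 0) • (lp.single 2 (m, m) 1 : ℓ²(ℤ × ℤ, ℂ)))
    0 fun m hm => by rw [if_neg hm, zero_smul]
  rw [if_pos rfl] at hs
  refine hUh₀.unique (((hasSum_h₀.add hs).const_smul (√2 : ℂ)⁻¹).congr_fun fun m => ?_)
  rw [coeff_sub_one_mul_sign, ← add_smul, smul_smul]

end SignedShift

open SignedShift in
/-- In ℓ²(ℤ×ℤ) there exist unitaries W_{j,k} (j,k ∈ {0,1}) acting on the standard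
basis by W_{j,k} e_{(m,n)} = (−1)^{j·χ(m+1)+k·χ(n+1)} e_{(m+1,n+1)} (χ the indicator
of being ≥ 0), and orthonormal vectors h₀ = Σ_{m<0} 2^{m/2} e_{(m,m)}, h₁ = e_{(0,0)}
with ⟨h₀, W_{j,k} h₀⟩ = 1/√2 and ⟨h₁, W_{j,k} h₀⟩ = (−1)^{j−k}/√2. -/
theorem statement10 :
    ∃ W : Fin 2 → Fin 2 →
        (lp (fun _ : ℤ × ℤ => ℂ) 2 ≃ₗᵢ[ℂ] lp (fun _ : ℤ × ℤ => ℂ) 2),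
      (∀ (j k : Fin 2) (m n : ℤ),
        W j k (lp.single 2 (m, n) (1 : ℂ)) =
          ((-1 : ℂ) ^ ((j : ℕ) * (if 0 ≤ m + 1 then 1 else 0)
              + (k : ℕ) * (if 0 ≤ n + 1 then 1 else 0))) •
            lp.single 2 (m + 1, n + 1) (1 : ℂ)) ∧
      ∃ h0 : lp (fun _ : ℤ × ℤ => ℂ) 2,
        HasSum (fun m : {m : ℤ // m < 0} =>
          ((Real.sqrt 2 ^ (m : ℤ) : ℝ) : ℂ) • lp.single 2 ((m : ℤ), (m : ℤ)) (1 : ℂ)) h0 ∧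
        ‖h0‖ = 1 ∧
        ‖(lp.single 2 ((0 : ℤ), (0 : ℤ)) (1 : ℂ) : lp (fun _ : ℤ × ℤ => ℂ) 2)‖ = 1 ∧
        ⟪h0, (lp.single 2 ((0 : ℤ), (0 : ℤ)) (1 : ℂ) : lp (fun _ : ℤ × ℤ => ℂ) 2)⟫_ℂ = 0 ∧
        ∀ j k : Fin 2,
          ⟪h0, W j k h0⟫_ℂ = (Real.sqrt 2 : ℂ)⁻¹ ∧
          ⟪(lp.single 2 ((0 : ℤ), (0 : ℤ)) (1 : ℂ) : lp (fun _ : ℤ × ℤ => ℂ) 2),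
              W j k h0⟫_ℂ =
            (-1 : ℂ) ^ ((j : ℤ) - (k : ℤ)) * (Real.sqrt 2 : ℂ)⁻¹ := by
  choose W hW using fun j k : Fin 2 => exists_linearIsometryEquiv_lp_single_eq_smul
    ((Equiv.addRight 1).prodCongr (Equiv.addRight 1)) (sign j k) (norm_sign j k)
  have hWh₀ (j k : Fin 2) :
      W j k h₀ = (√2 : ℂ)⁻¹ • (h₀ + (-1 : ℂ) ^ ((j : ℕ) + k) • lp.single 2 (0, 0) 1) :=
    map_h₀ (W j k).toContinuousLinearEquiv.toContinuousLinearMap fun m => hW j k (m, m)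
  have hnorm : ‖(lp.single 2 ((0 : ℤ), (0 : ℤ)) (1 : ℂ) : ℓ²(ℤ × ℤ, ℂ))‖ = 1 :=
    orthonormal_single_diag.1 0
  refine ⟨W, fun j k m n => hW j k (m, n), h₀, hasSum_subtype_neg_h₀, norm_h₀, hnorm,
    inner_eq_zero_symm.1 inner_single_zero_h₀, fun j k => ⟨?_, ?_⟩⟩
  · rw [hWh₀, inner_smul_right, inner_add_right, inner_smul_right, inner_h₀_self,
      inner_eq_zero_symm.1 inner_single_zero_h₀, mul_zero, add_zero, mul_one]
  · rw [hWh₀, inner_smul_right, inner_add_right, inner_smul_right, inner_single_zero_h₀,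
      inner_self_eq_one_of_norm_eq_one hnorm, neg_one_zpow_natCast_sub]
    ring
end
end

section
/- For every n ≥ 1, there do not exist unitary matrices u_0, u_1, v_0, v_1 ∈ M_n(ℂ) and matrices H_0, H_1 ∈ M_n(ℂ) with tr(H_0^* H_0) = tr(H_1^* H_1) = 1 and tr(H_0^* H_1) = 0, such that for all j, k ∈ {0,1}: tr(H_0^* (u_j H_0 v_k^T)) = 1/√2 and tr(H_1^* (u_j H_0 v_k^T)) = (−1)^{j−k}/√2. -/
/-!
Put `σ = H₀ᴴ H₀` and `Pₖ = v_kᵀ`. Each `u_j H₀ P_k` is a unit vector whose coefficients along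
the orthonormal pair `H₀, H₁` already have total weight one, so by the equality case of Bessel's
inequality `u_j H₀ P_k = (H₀ ± H₁)/√2`. Comparing Gram matrices of these four vectors, the unitary
`B = P₀ P₁ᴴ` commutes with `σ`, satisfies `σ Bᴴ = σ B`, and `P₀ σ P₀ᴴ = σ (1 + B)`; hence
`M = P₀ σ P₀ᴴ` satisfies `M² = 2 σ M`. If `σ x = μ x`, then `M (P₀ x) = μ P₀ x` and therefore
`σ (P₀ x) = (μ/2) P₀ x`: the finitely many eigenvalues of `σ` are closed under halving, so they
all vanish. The Hermitian matrix `σ` is then `0`, contradicting `tr σ = 1`.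
-/

open Matrix

open scoped ComplexOrder in
/-- `‖X - (a • G + b • H)‖² = ‖X‖² - ‖a‖² - ‖b‖²` for the Frobenius norm. -/
theorem eq_smul_add_smul_of_bessel_eq {𝕜 l m : Type*} [RCLike 𝕜] [Fintype l] [Fintype m]
    {G H X : Matrix l m 𝕜} {a b : 𝕜}
    (hG : (Gᴴ * G).trace = 1) (hH : (Hᴴ * H).trace = 1) (hGH : (Gᴴ * H).trace = 0)
    (hX : (Xᴴ * X).trace = 1) (ha : (Gᴴ * X).trace = a) (hb : (Hᴴ * X).trace = b)
    (hab : ‖a‖ ^ 2 + ‖b‖ ^ 2 = 1) : X = a • G + b • H := by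
  have trace_swap : ∀ A B : Matrix l m 𝕜, (Bᴴ * A).trace = star (Aᴴ * B).trace := fun A B => by
    rw [← trace_conjTranspose, conjTranspose_mul, conjTranspose_conjTranspose]
  have hab' : star a * a + star b * b = 1 := by
    simp only [RCLike.star_def, RCLike.conj_mul]; exact_mod_cast hab
  rw [← sub_eq_zero, ← trace_conjTranspose_mul_self_eq_zero_iff]
  simp only [conjTranspose_sub, conjTranspose_add, conjTranspose_smul, Matrix.sub_mul,
    Matrix.mul_sub, Matrix.add_mul, Matrix.mul_add, Matrix.smul_mul, Matrix.mul_smul, trace_sub,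
    trace_add, trace_smul, smul_eq_mul, trace_swap G X, trace_swap H X, trace_swap G H, hX, ha,
    hb, hG, hH, hGH, star_zero]
  linear_combination (-1 : 𝕜) * hab'

theorem mul_one_add_mul_self_eq_two_mul {R : Type*} [Ring R] {s b b' : R}
    (hcomm : b * s = s * b) (hsymm : b * s = s * b') (hb : b' * b = 1) :
    s * (1 + b) * (s * (1 + b)) = (2 : R) * (s * (s * (1 + b))) := by
  have hsbb : s * b * b = s := by rw [← hcomm, hsymm, mul_assoc, hb, mul_one]
  calc s * (1 + b) * (s * (1 + b)) = s * s + s * (s * b) + s * (b * s) + s * (b * s) * b := by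
        noncomm_ring
    _ = s * s + s * (s * b) + s * (s * b) + s * (s * b * b) := by rw [hcomm]; noncomm_ring
    _ = (2 : R) * (s * (s * (1 + b))) := by rw [hsbb]; noncomm_ring

section Gram

variable {𝕜 l m : Type*} [RCLike 𝕜] [Fintype l] [DecidableEq l]

theorem conjTranspose_mul_unitary_mul {U : Matrix l l 𝕜} (hU : U ∈ unitaryGroup l 𝕜)
    (X Y : Matrix l m 𝕜) : (U * X)ᴴ * (U * Y) = Xᴴ * Y := by
  rw [conjTranspose_mul, Matrix.mul_assoc, ← Matrix.mul_assoc Uᴴ, ← star_eq_conjTranspose,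
    Unitary.star_mul_self_of_mem hU, Matrix.one_mul]

theorem conjTranspose_mul_eq_of_unitary_mul_eq {U U' : Matrix l l 𝕜}
    (hU : U ∈ unitaryGroup l 𝕜) (hU' : U' ∈ unitaryGroup l 𝕜) {X X' Y Y' : Matrix l m 𝕜}
    (hX : U * X = U' * X') (hY : U * Y = U' * Y') : Xᴴ * Y = X'ᴴ * Y' := by
  rw [← conjTranspose_mul_unitary_mul hU, hX, hY, conjTranspose_mul_unitary_mul hU']

variable [Fintype m] [DecidableEq m]

theorem trace_conjTranspose_mul_self_unitary_mul_mul_unitary {U : Matrix l l 𝕜}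
    {W : Matrix m m 𝕜} (hU : U ∈ unitaryGroup l 𝕜) (hW : W ∈ unitaryGroup m 𝕜) (X : Matrix l m 𝕜) :
    ((U * X * W)ᴴ * (U * X * W)).trace = (Xᴴ * X).trace := by
  rw [Matrix.mul_assoc, conjTranspose_mul_unitary_mul hU, conjTranspose_mul, Matrix.mul_assoc,
    trace_mul_comm, Matrix.mul_assoc, Matrix.mul_assoc, ← star_eq_conjTranspose,
    Unitary.mul_star_self_of_mem hW, Matrix.mul_one]

theorem mul_self_conj_gram_eq_two_mul {G : Matrix l m 𝕜} {U₀ U₁ : Matrix l l 𝕜}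
    {P₀ P₁ : Matrix m m 𝕜} {c : 𝕜} (hU₀ : U₀ ∈ unitaryGroup l 𝕜) (hU₁ : U₁ ∈ unitaryGroup l 𝕜)
    (hP₀ : P₀ ∈ unitaryGroup m 𝕜) (hP₁ : P₁ ∈ unitaryGroup m 𝕜)
    (h₀₀ : U₀ * G * P₀ = U₁ * G * P₁) (h₀₁ : U₀ * G * P₁ = U₁ * G * P₀)
    (hsum : U₀ * G * (P₀ + P₁) = c • G) (hc : star c * c = 2) :
    (P₀ * (Gᴴ * G) * P₀ᴴ) * (P₀ * (Gᴴ * G) * P₀ᴴ) =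
      2 * ((Gᴴ * G) * (P₀ * (Gᴴ * G) * P₀ᴴ)) := by
  set σ := Gᴴ * G
  set B := P₀ * P₁ᴴ
  have u₀ : P₀ * P₀ᴴ = 1 := Unitary.mul_star_self_of_mem hP₀
  have u₁ : P₁ * P₁ᴴ = 1 := Unitary.mul_star_self_of_mem hP₁
  have hB : B ∈ unitaryGroup m 𝕜 := mul_mem hP₀ (Unitary.star_mem hP₁)
  have hBB : Bᴴ * B = 1 := Unitary.star_mul_self_of_mem hB
  have hBB' : B * Bᴴ = 1 := Unitary.mul_star_self_of_mem hB
  simp only [Matrix.mul_assoc] at h₀₀ h₀₁ hsum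
  have gram₀₀ : P₀ᴴ * σ * P₀ = P₁ᴴ * σ * P₁ := by
    simpa [σ, conjTranspose_mul, Matrix.mul_assoc] using
      conjTranspose_mul_eq_of_unitary_mul_eq hU₀ hU₁ h₀₀ h₀₀
  have gram₀₁ : P₀ᴴ * σ * P₁ = P₁ᴴ * σ * P₀ := by
    simpa [σ, conjTranspose_mul, Matrix.mul_assoc] using
      conjTranspose_mul_eq_of_unitary_mul_eq hU₀ hU₁ h₀₀ h₀₁
  have gram_sum : (P₀ + P₁)ᴴ * σ * (P₀ + P₁) = (2 : 𝕜) • σ := by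
    have := conjTranspose_mul_eq_of_unitary_mul_eq hU₀ (one_mem _)
      (hsum.trans (Matrix.one_mul _).symm) (hsum.trans (Matrix.one_mul _).symm)
    rw [conjTranspose_smul, Matrix.smul_mul, Matrix.mul_smul, smul_smul, hc] at this
    simpa [σ, conjTranspose_mul, Matrix.mul_assoc] using this
  have hcomm : B * σ = σ * B := calc
    B * σ = P₀ * (P₁ᴴ * σ * P₁) * P₁ᴴ := by simp only [B, Matrix.mul_assoc, u₁, Matrix.mul_one]
    _ = P₀ * (P₀ᴴ * σ * P₀) * P₁ᴴ := by rw [gram₀₀]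
    _ = σ * B := by simp only [B, ← Matrix.mul_assoc, u₀, Matrix.one_mul]
  have hsymm : B * σ = σ * Bᴴ := calc
    B * σ = P₀ * (P₁ᴴ * σ * P₀) * P₀ᴴ := by simp only [B, Matrix.mul_assoc, u₀, Matrix.mul_one]
    _ = P₀ * (P₀ᴴ * σ * P₁) * P₀ᴴ := by rw [gram₀₁]
    _ = σ * Bᴴ := by
      simp only [B, conjTranspose_mul, conjTranspose_conjTranspose, ← Matrix.mul_assoc, u₀,
        Matrix.one_mul]
  have hM : P₀ * σ * P₀ᴴ = σ * (1 + B) := by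
    refine smul_right_injective _ (two_ne_zero (α := 𝕜)) ?_
    calc (2 : 𝕜) • (P₀ * σ * P₀ᴴ) = P₀ * ((P₀ + P₁)ᴴ * σ * (P₀ + P₁)) * P₀ᴴ := by
          rw [gram_sum, Matrix.mul_smul, Matrix.smul_mul]
      _ = (1 + B) * σ * (1 + Bᴴ) := by
          simp only [B, conjTranspose_add, conjTranspose_mul, conjTranspose_conjTranspose,
            Matrix.mul_add, Matrix.add_mul, ← Matrix.mul_assoc, u₀, Matrix.one_mul]
          simp only [Matrix.mul_assoc, u₀, Matrix.mul_one]
      _ = σ + B * σ + σ * Bᴴ + B * σ * Bᴴ := by noncomm_ring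
      _ = σ + σ * B + σ * B + σ * (B * Bᴴ) := by rw [← hsymm, hcomm]; noncomm_ring
      _ = (2 : 𝕜) • (σ * (1 + B)) := by
          rw [hBB', two_smul, Matrix.mul_add, Matrix.mul_one]; abel
  rw [hM]
  exact mul_one_add_mul_self_eq_two_mul hcomm hsymm hBB

end Gram

theorem Set.Finite.eq_zero_of_div_two_mem {K : Type*} [Field K] [CharZero K] {S : Set K}
    (hS : S.Finite) (hhalf : ∀ μ ∈ S, μ / 2 ∈ S) {μ : K} (hμ : μ ∈ S) : μ = 0 := by
  by_contra hμ0
  have hmem : ∀ k : ℕ, μ / 2 ^ k ∈ S := by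
    intro k
    induction k with
    | zero => simpa using hμ
    | succ k ih => simpa [pow_succ, div_div] using hhalf _ ih
  have hinj : Function.Injective fun k : ℕ => μ / 2 ^ k := by
    intro i j hij
    have h2 : ((2 ^ i : ℕ) : K) = ((2 ^ j : ℕ) : K) := by
      push_cast
      exact inv_injective (mul_left_cancel₀ hμ0 (by simpa only [div_eq_mul_inv] using hij))
    exact Nat.pow_right_injective le_rfl (Nat.cast_injective h2)
  exact Set.infinite_of_injective_forall_mem hinj hmem hS

namespace Matrix

variable {n : Type*} [Fintype n] [DecidableEq n]

theorem hasEigenvalue_div_two_of_conj_mul_self_eq {K : Type*} [Field K] [CharZero K]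
    {σ V W : Matrix n n K} (hWV : W * V = 1)
    (hsq : V * σ * W * (V * σ * W) = 2 * (σ * (V * σ * W))) {μ : K}
    (hμ : Module.End.HasEigenvalue (toLin' σ) μ) :
    Module.End.HasEigenvalue (toLin' σ) (μ / 2) := by
  by_cases hμ0 : μ = 0
  · simpa [hμ0] using hμ
  obtain ⟨x, hx⟩ := hμ.exists_hasEigenvector
  have hxμ : σ *ᵥ x = μ • x := by simpa only [toLin'_apply] using hx.apply_eq_smul
  set M := V * σ * W
  have hy0 : V *ᵥ x ≠ 0 := fun h => hx.2 <| by
    rw [← one_mulVec x, ← hWV, ← mulVec_mulVec, h, mulVec_zero]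
  have hMy : M *ᵥ (V *ᵥ x) = μ • (V *ᵥ x) := by
    rw [mulVec_mulVec, show M * V = V * σ * (W * V) by simp only [M, Matrix.mul_assoc], hWV,
      Matrix.mul_one, ← mulVec_mulVec, hxμ, mulVec_smul]
  have hdouble : (2 * μ) • (σ *ᵥ (V *ᵥ x)) = (2 * μ) • ((μ / 2) • (V *ᵥ x)) := calc
    (2 * μ) • (σ *ᵥ (V *ᵥ x)) = (2 * (σ * M)) *ᵥ (V *ᵥ x) := by
        rw [two_mul (σ * M), add_mulVec, ← mulVec_mulVec, hMy, mulVec_smul, ← two_smul K,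
          smul_smul]
    _ = (2 * μ) • ((μ / 2) • (V *ᵥ x)) := by
        rw [← hsq, ← mulVec_mulVec, hMy, mulVec_smul, hMy, smul_smul, smul_smul]
        congr 1; field_simp
  exact Module.End.hasEigenvalue_of_hasEigenvector ⟨Module.End.mem_eigenspace_iff.mpr
    (by rw [toLin'_apply]; exact smul_right_injective _ (mul_ne_zero two_ne_zero hμ0) hdouble), hy0⟩

theorem IsHermitian.eq_zero_of_conj_mul_self_eq {𝕜 : Type*} [RCLike 𝕜] {σ V W : Matrix n n 𝕜}
    (hσ : σ.IsHermitian) (hWV : W * V = 1)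
    (hsq : V * σ * W * (V * σ * W) = 2 * (σ * (V * σ * W))) : σ = 0 := by
  by_contra hσ0
  obtain ⟨v, t, ht, hv, hσv⟩ := hσ.exists_eigenvector_of_ne_zero hσ0
  have ht' : Module.End.HasEigenvalue (toLin' σ) (t : 𝕜) :=
    Module.End.hasEigenvalue_of_hasEigenvector ⟨Module.End.mem_eigenspace_iff.mpr
      (by rw [toLin'_apply, hσv, RCLike.real_smul_eq_coe_smul (K := 𝕜)]), hv⟩
  refine ht ((RCLike.ofReal_eq_zero (K := 𝕜)).mp ?_)
  exact (Module.End.finite_hasEigenvalue _).eq_zero_of_div_two_mem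
    (fun _ => hasEigenvalue_div_two_of_conj_mul_self_eq hWV hsq) ht'

end Matrix

theorem statement11_general (n : ℕ) :
    ¬ ∃ (u v : Fin 2 → Matrix (Fin n) (Fin n) ℂ) (H0 H1 : Matrix (Fin n) (Fin n) ℂ),
      (∀ j, u j ∈ Matrix.unitaryGroup (Fin n) ℂ) ∧
      (∀ k, v k ∈ Matrix.unitaryGroup (Fin n) ℂ) ∧
      (H0ᴴ * H0).trace = 1 ∧ (H1ᴴ * H1).trace = 1 ∧ (H0ᴴ * H1).trace = 0 ∧
      ∀ j k : Fin 2,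
        (H0ᴴ * (u j * H0 * (v k)ᵀ)).trace = (Real.sqrt 2 : ℂ)⁻¹ ∧
        (H1ᴴ * (u j * H0 * (v k)ᵀ)).trace =
          (-1 : ℂ) ^ ((j : ℤ) - (k : ℤ)) * (Real.sqrt 2 : ℂ)⁻¹ := by
  rintro ⟨u, v, H0, H1, hu, hv, hH0, hH1, hH01, hcorr⟩
  set s : ℂ := (Real.sqrt 2 : ℂ)⁻¹
  have hs : ‖s‖ ^ 2 = 2⁻¹ := by simp [s]
  have hvT : ∀ k, (v k)ᵀ ∈ unitaryGroup (Fin n) ℂ :=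
    fun k => transpose_mem_unitaryGroup_iff.mpr (hv k)
  have hX : ∀ j k, u j * H0 * (v k)ᵀ = s • H0 + ((-1) ^ ((j : ℤ) - (k : ℤ)) * s) • H1 :=
    fun j k => eq_smul_add_smul_of_bessel_eq hH0 hH1 hH01
      ((trace_conjTranspose_mul_self_unitary_mul_mul_unitary (hu j) (hvT k) H0).trans hH0)
      (hcorr j k).1 (hcorr j k).2 (by
        rw [norm_mul, norm_zpow, norm_neg, norm_one, _root_.one_zpow, one_mul, hs]; norm_num)
  have h₀₀ : u 0 * H0 * (v 0)ᵀ = s • H0 + s • H1 := by simpa using hX 0 0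
  have h₁₁ : u 1 * H0 * (v 1)ᵀ = s • H0 + s • H1 := by simpa using hX 1 1
  have h₀₁ : u 0 * H0 * (v 1)ᵀ = s • H0 - s • H1 := by simpa [sub_eq_add_neg] using hX 0 1
  have h₁₀ : u 1 * H0 * (v 0)ᵀ = s • H0 - s • H1 := by simpa [sub_eq_add_neg] using hX 1 0
  have hc : star (2 * s) * (2 * s) = 2 := by
    rw [Complex.star_def, RCLike.conj_mul, norm_mul]
    push_cast [mul_pow]
    norm_num [← Complex.ofReal_pow, hs]
  have hsq := mul_self_conj_gram_eq_two_mul (hu 0) (hu 1) (hvT 0) (hvT 1)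
    (h₀₀.trans h₁₁.symm) (h₀₁.trans h₁₀.symm)
    (by rw [Matrix.mul_add, h₀₀, h₀₁]; module) hc
  have hσ : H0ᴴ * H0 = 0 := (isHermitian_conjTranspose_mul_self H0).eq_zero_of_conj_mul_self_eq
    (Unitary.star_mul_self_of_mem (hvT 0)) hsq
  simp [hσ] at hH0

/-- The correlation ⟨h₀,(u_j⊗v_k)h₀⟩ = 1/√2, ⟨h₁,(u_j⊗v_k)h₀⟩ = (−1)^{j−k}/√2 with
orthonormal h₀, h₁ cannot be realized on a finite-dimensional Hilbert space.  Here
ℂ^n ⊗ ℂ^n is identified with M_n(ℂ) via vectorization, (u ⊗ v)A = u A vᵀ, and the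
inner product is the Frobenius inner product ⟨A, B⟩ = tr(AᴴB). -/
theorem statement11 (n : ℕ) (hn : 1 ≤ n) :
    ¬ ∃ (u v : Fin 2 → Matrix (Fin n) (Fin n) ℂ) (H0 H1 : Matrix (Fin n) (Fin n) ℂ),
      (∀ j, u j ∈ Matrix.unitaryGroup (Fin n) ℂ) ∧
      (∀ k, v k ∈ Matrix.unitaryGroup (Fin n) ℂ) ∧
      (H0ᴴ * H0).trace = 1 ∧ (H1ᴴ * H1).trace = 1 ∧ (H0ᴴ * H1).trace = 0 ∧
      ∀ j k : Fin 2,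
        (H0ᴴ * (u j * H0 * (v k)ᵀ)).trace = (Real.sqrt 2 : ℂ)⁻¹ ∧
        (H1ᴴ * (u j * H0 * (v k)ᵀ)).trace =
          (-1 : ℂ) ^ ((j : ℤ) - (k : ℤ)) * (Real.sqrt 2 : ℂ)⁻¹ :=
  statement11_general n
end

section
/- There do not exist unitaries a_{j,l} on H_A and b_{k,l} on H_B (j, k, l ∈ {0,1}), bounded operators W_{j,k,l} on K representing a_{j,l} ⊗ b_{k,l}, and orthonormal vectors h_0, h_1 ∈ K such that for all j, k ∈ {0,1}: ⟨h_0, W_{j,k,0} h_0⟩ = 1/√2, ⟨h_1, W_{j,k,0} h_0⟩ = (−1)^{j−k}/√2, ⟨h_1, W_{j,k,1} h_1⟩ = 1/√2, and ⟨h_0, W_{j,k,1} h_1⟩ = (−1)^{j−k}/√2. -/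
/-!
Write `N(u)` for the norm of the bilinear form `(x, y) ↦ ⟪u, t x y⟫` (the injective norm of `u`).
Each `W j k l` is isometric, so the prescribed correlations pin down
`W j k 0 h₀ = (h₀ + (-1)^(j-k) h₁) / √2`. Comparing the four choices of `(j, k)` shows that
`X = a 1 0 ∘ (a 0 0)⁻¹` and `Y = b 1 0 ∘ (b 0 0)⁻¹`, acting in either variable, fix the form of
`h₀` and negate that of `h₁`. Hence the two forms live on the orthogonal blocks given by the
`±1`-eigenspaces of `X` and `Y`, and `N(h₀ + h₁) ≤ max (N h₀) (N h₁)`. On the other hand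
`h₀ + h₁ = √2 • W 0 0 0 h₀`, and `W 0 0 0` is a product of unitaries, so `N(h₀ + h₁) = √2 N(h₀)`.
The same argument for `l = 1`, with `h₀` and `h₁` exchanged, forces `N(h₀) = 0`: then `h₀` is
orthogonal to the range of `t`, hence zero.
-/

open scoped InnerProductSpace ComplexConjugate

section Hilbert

variable {𝕜 E F : Type*} [RCLike 𝕜] [NormedAddCommGroup E] [InnerProductSpace 𝕜 E]
  [NormedAddCommGroup F] [InnerProductSpace 𝕜 F]

theorem eq_of_norm_le_of_inner_eq {v w : E} (hv : ‖v‖ ≤ ‖w‖) (h : ⟪w, v⟫_𝕜 = ⟪w, w⟫_𝕜) :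
    v = w := by
  have hre : RCLike.re ⟪v, w⟫_𝕜 = ‖w‖ ^ 2 := by
    rw [← inner_conj_symm, RCLike.conj_re, h, ← norm_sq_eq_re_inner]
  have hsq : ‖v - w‖ ^ 2 ≤ 0 := by
    rw [norm_sub_sq (𝕜 := 𝕜), hre]
    nlinarith [norm_nonneg v]
  rw [← sub_eq_zero, ← norm_eq_zero]
  exact pow_eq_zero_iff two_ne_zero |>.mp (le_antisymm hsq (sq_nonneg _))

theorem inner_map_map_of_dense_span {s : Set E} (hs : Dense (Submodule.span 𝕜 s : Set E))
    (W : E →L[𝕜] F) (h : ∀ a ∈ s, ∀ b ∈ s, ⟪W a, W b⟫_𝕜 = ⟪a, b⟫_𝕜) (a b : E) :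
    ⟪W a, W b⟫_𝕜 = ⟪a, b⟫_𝕜 := by
  have hleft (a : E) (ha : a ∈ s) (b : E) : ⟪W a, W b⟫_𝕜 = ⟪a, b⟫_𝕜 :=
    congr($(ContinuousLinearMap.ext_on hs (f := (innerSL 𝕜 (W a)).comp W) (g := innerSL 𝕜 a)
      fun b hb => h a ha b hb) b)
  have hright (b : E) : (innerSL 𝕜 (W b)).comp W = innerSL 𝕜 b :=
    ContinuousLinearMap.ext_on hs fun a ha => by
      simp only [ContinuousLinearMap.comp_apply, innerSL_apply_apply]
      rw [← inner_conj_symm, hleft a ha b, inner_conj_symm]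
  rw [← inner_conj_symm, ← inner_conj_symm a]
  exact congrArg conj congr($(hright b) a)

theorem norm_apply_apply_of_inner_self {G : Type*} [NormedAddCommGroup G] [InnerProductSpace 𝕜 G]
    {t : E → F → G} (ht : ∀ x y, ⟪t x y, t x y⟫_𝕜 = ⟪x, x⟫_𝕜 * ⟪y, y⟫_𝕜) (x : E) (y : F) :
    ‖t x y‖ = ‖x‖ * ‖y‖ := by
  have h := ht x y
  simp only [inner_self_eq_norm_sq_to_K] at h
  have h' : ‖t x y‖ ^ 2 = (‖x‖ * ‖y‖) ^ 2 := by rw [mul_pow]; exact_mod_cast h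
  exact (pow_left_inj₀ (norm_nonneg _) (by positivity) two_ne_zero).mp h'

theorem norm_sq_add_norm_sq_starProjection_le {U U' : Submodule 𝕜 E} [U.HasOrthogonalProjection]
    [U'.HasOrthogonalProjection] (hU : U ⟂ U') (x : E) :
    ‖U.starProjection x‖ ^ 2 + ‖U'.starProjection x‖ ^ 2 ≤ ‖x‖ ^ 2 := by
  have h : ‖U'.starProjection x‖ ≤ ‖Uᗮ.starProjection x‖ := by
    rw [← Submodule.starProjection_comp_starProjection_of_le
      (Submodule.isOrtho_iff_le.mp hU.symm)]
    exact Submodule.norm_starProjection_apply_le _ _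
  rw [Submodule.norm_sq_eq_add_norm_sq_starProjection x U]
  gcongr

end Hilbert

section Eigenspace

variable {𝕜 E F : Type*} [RCLike 𝕜] [NormedAddCommGroup E] [InnerProductSpace 𝕜 E]
  [NormedAddCommGroup F] [InnerProductSpace 𝕜 F]

/-- The eigenspace, written as the kernel of a continuous map so that it is closed and carries an
orthogonal projection. -/
def closedEigenspace (X : E ≃ₗᵢ[𝕜] E) (c : 𝕜) : Submodule 𝕜 E :=
  ((X : E →L[𝕜] E) - c • ContinuousLinearMap.id 𝕜 E).ker

theorem mem_closedEigenspace {X : E ≃ₗᵢ[𝕜] E} {c : 𝕜} {v : E} :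
    v ∈ closedEigenspace X c ↔ X v = c • v := by
  simp [closedEigenspace, sub_eq_zero]

instance [CompleteSpace E] (X : E ≃ₗᵢ[𝕜] E) (c : 𝕜) :
    (closedEigenspace X c).HasOrthogonalProjection := by
  unfold closedEigenspace
  infer_instance

theorem isOrtho_closedEigenspace (X : E ≃ₗᵢ[𝕜] E) {c d : 𝕜} (hc : ‖c‖ = 1) (hcd : c ≠ d) :
    closedEigenspace X c ⟂ closedEigenspace X d := by
  refine Submodule.isOrtho_iff_inner_eq.mpr fun a ha b hb => ?_
  have h : ⟪a, b⟫_𝕜 = conj c * d * ⟪a, b⟫_𝕜 := calc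
    ⟪a, b⟫_𝕜 = ⟪X a, X b⟫_𝕜 := (X.inner_map_map a b).symm
    _ = conj c * d * ⟪a, b⟫_𝕜 := by
      rw [mem_closedEigenspace.mp ha, mem_closedEigenspace.mp hb, inner_smul_left,
        inner_smul_right, mul_assoc]
  have hcc : c * conj c = 1 := by rw [RCLike.mul_conj, hc]; simp
  have h' : (c - d) * ⟪a, b⟫_𝕜 = 0 := by linear_combination c * h + d * ⟪a, b⟫_𝕜 * hcc
  exact (mul_eq_zero.mp h').resolve_left (sub_ne_zero.mpr hcd)

theorem apply_starProjection_closedEigenspace [CompleteSpace E] (X : E ≃ₗᵢ[𝕜] E) {c : 𝕜}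
    (hc : ‖c‖ = 1) (ℓ : E →L[𝕜] 𝕜) (hℓ : ∀ x, ℓ (X x) = c * ℓ x) (x : E) :
    ℓ ((closedEigenspace X c).starProjection x) = ℓ x := by
  set ξ := (InnerProductSpace.toDual 𝕜 E).symm ℓ
  have hξ (x : E) : ℓ x = ⟪ξ, x⟫_𝕜 := InnerProductSpace.toDual_symm_apply.symm
  have hmem : ξ ∈ closedEigenspace X c := by
    rw [mem_closedEigenspace, ← sub_eq_zero]
    refine ext_inner_right 𝕜 fun z => ?_
    rw [← X.apply_symm_apply z, inner_sub_left, X.inner_map_map, inner_smul_left, ← hξ, ← hξ,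
      hℓ, ← mul_assoc, RCLike.conj_mul, hc, inner_zero_left]
    simp
  rw [hξ, hξ, ← Submodule.inner_starProjection_left_eq_right,
    Submodule.starProjection_eq_self_iff.mpr hmem]

end Eigenspace

section BilinearForm

variable {𝕜 E F G : Type*} [RCLike 𝕜] [NormedAddCommGroup E] [InnerProductSpace 𝕜 E]
  [NormedAddCommGroup F] [InnerProductSpace 𝕜 F] [NormedAddCommGroup G] [InnerProductSpace 𝕜 G]

theorem apply_starProjection_apply_starProjection [CompleteSpace E] [CompleteSpace F]
    (φ : E →L[𝕜] F →L[𝕜] 𝕜) (X : E ≃ₗᵢ[𝕜] E) (Y : F ≃ₗᵢ[𝕜] F) {c : 𝕜} (hc : ‖c‖ = 1)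
    (hX : ∀ x y, φ (X x) y = c * φ x y) (hY : ∀ x y, φ x (Y y) = c * φ x y) (x : E) (y : F) :
    φ ((closedEigenspace X c).starProjection x) ((closedEigenspace Y c).starProjection y) =
      φ x y := by
  rw [apply_starProjection_closedEigenspace Y hc (φ _) (hY _)]
  exact apply_starProjection_closedEigenspace X hc (φ.flip y) (hX · y) x

theorem norm_add_le_max_of_isOrtho (φ ψ : E →L[𝕜] F →L[𝕜] 𝕜) {U U' : Submodule 𝕜 E}
    {V V' : Submodule 𝕜 F} [U.HasOrthogonalProjection] [U'.HasOrthogonalProjection]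
    [V.HasOrthogonalProjection] [V'.HasOrthogonalProjection] (hU : U ⟂ U') (hV : V ⟂ V')
    (hφ : ∀ x y, φ (U.starProjection x) (V.starProjection y) = φ x y)
    (hψ : ∀ x y, ψ (U'.starProjection x) (V'.starProjection y) = ψ x y) :
    ‖φ + ψ‖ ≤ max ‖φ‖ ‖ψ‖ := by
  refine (φ + ψ).opNorm_le_bound₂ (le_max_of_le_left φ.opNorm_nonneg) fun x y => ?_
  have hx := norm_sq_add_norm_sq_starProjection_le hU x
  have hy := norm_sq_add_norm_sq_starProjection_le hV y
  calc ‖(φ + ψ) x y‖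
      = ‖φ (U.starProjection x) (V.starProjection y) +
          ψ (U'.starProjection x) (V'.starProjection y)‖ := by rw [hφ, hψ]; rfl
    _ ≤ ‖φ‖ * ‖U.starProjection x‖ * ‖V.starProjection y‖ +
          ‖ψ‖ * ‖U'.starProjection x‖ * ‖V'.starProjection y‖ :=
        norm_add_le_of_le (φ.le_opNorm₂ _ _) (ψ.le_opNorm₂ _ _)
    _ ≤ max ‖φ‖ ‖ψ‖ * (‖U.starProjection x‖ * ‖V.starProjection y‖ +
          ‖U'.starProjection x‖ * ‖V'.starProjection y‖) := by
        rw [mul_add, ← mul_assoc, ← mul_assoc]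
        gcongr
        exacts [le_max_left _ _, le_max_right _ _]
    _ ≤ max ‖φ‖ ‖ψ‖ * (‖x‖ * ‖y‖) := by
        gcongr
        nlinarith [mul_le_mul hx hy (by positivity) (by positivity),
          sq_nonneg (‖U.starProjection x‖ * ‖V'.starProjection y‖ -
            ‖V.starProjection y‖ * ‖U'.starProjection x‖),
          mul_nonneg (norm_nonneg x) (norm_nonneg y)]
    _ = max ‖φ‖ ‖ψ‖ * ‖x‖ * ‖y‖ := (mul_assoc _ _ _).symm

theorem norm_le_norm_mul_of_apply_eq_smul {G' : Type*} [NormedAddCommGroup G'] [NormedSpace 𝕜 G']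
    (φ ψ : E →L[𝕜] F →L[𝕜] G') (A : E →ₗᵢ[𝕜] E) (B : F →ₗᵢ[𝕜] F) (c : 𝕜)
    (h : ∀ x y, φ x y = c • ψ (A x) (B y)) : ‖φ‖ ≤ ‖c‖ * ‖ψ‖ := by
  refine φ.opNorm_le_bound₂ (by positivity) fun x y => ?_
  calc ‖φ x y‖ = ‖c‖ * ‖ψ (A x) (B y)‖ := by rw [h, norm_smul]
    _ ≤ ‖c‖ * (‖ψ‖ * ‖A x‖ * ‖B y‖) := by gcongr; exact ψ.le_opNorm₂ _ _
    _ = ‖c‖ * ‖ψ‖ * ‖x‖ * ‖y‖ := by rw [A.norm_map, B.norm_map]; ring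

noncomputable def innerForm (T : E →L[𝕜] F →L[𝕜] G) (u : G) : E →L[𝕜] F →L[𝕜] 𝕜 :=
  ContinuousLinearMap.compL 𝕜 F G 𝕜 (innerSL 𝕜 u) ∘L T

@[simp]
theorem innerForm_apply (T : E →L[𝕜] F →L[𝕜] G) (u : G) (x : E) (y : F) :
    innerForm T u x y = ⟪u, T x y⟫_𝕜 :=
  rfl

theorem eq_zero_of_innerForm_eq_zero {T : E →L[𝕜] F →L[𝕜] G}
    (hdense : Dense (Submodule.span 𝕜 (Set.range fun p : E × F => T p.1 p.2) : Set G)) {u : G}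
    (h : innerForm T u = 0) : u = 0 := by
  have hu : innerSL 𝕜 u = 0 := ContinuousLinearMap.ext_on hdense (g := 0) <| by
    rintro _ ⟨⟨x, y⟩, rfl⟩
    simpa using congr($h x y)
  exact inner_self_eq_zero.mp congr($hu u)

theorem inner_map_map_of_apply_apply_eq {T : E →L[𝕜] F →L[𝕜] G}
    (hT : ∀ x x' y y', ⟪T x y, T x' y'⟫_𝕜 = ⟪x, x'⟫_𝕜 * ⟪y, y'⟫_𝕜)
    (hdense : Dense (Submodule.span 𝕜 (Set.range fun p : E × F => T p.1 p.2) : Set G))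
    {A : E →ₗᵢ[𝕜] E} {B : F →ₗᵢ[𝕜] F} {W : G →L[𝕜] G} (hW : ∀ x y, W (T x y) = T (A x) (B y))
    (a b : G) : ⟪W a, W b⟫_𝕜 = ⟪a, b⟫_𝕜 :=
  inner_map_map_of_dense_span hdense W (by
    rintro _ ⟨⟨x, y⟩, rfl⟩ _ ⟨⟨x', y'⟩, rfl⟩
    simp only [hW, hT, LinearIsometry.inner_map_map]) a b

end BilinearForm

section Correlation

variable {E F G : Type*} [NormedAddCommGroup E] [InnerProductSpace ℂ E]
  [NormedAddCommGroup F] [InnerProductSpace ℂ F] [NormedAddCommGroup G] [InnerProductSpace ℂ G]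

theorem eq_inv_sqrt_two_smul_add {u₀ u₁ v : G} (hu₀ : ‖u₀‖ = 1) (hu₁ : ‖u₁‖ = 1)
    (h₀₁ : ⟪u₀, u₁⟫_ℂ = 0) (hv : ‖v‖ ≤ 1) {ε : ℂ} (hε : ‖ε‖ = 1)
    (hc₀ : ⟪u₀, v⟫_ℂ = (Real.sqrt 2 : ℂ)⁻¹) (hc₁ : ⟪u₁, v⟫_ℂ = ε * (Real.sqrt 2 : ℂ)⁻¹) :
    v = (Real.sqrt 2 : ℂ)⁻¹ • (u₀ + ε • u₁) := by
  set s : ℂ := (Real.sqrt 2 : ℂ)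
  have hs : s * s = 2 := by
    rw [← Complex.ofReal_mul, Real.mul_self_sqrt zero_le_two, Complex.ofReal_ofNat]
  have hs₀ : s ≠ 0 := by simp [s]
  have hsc : conj s = s := Complex.conj_ofReal _
  have hε' : conj ε * ε = 1 := by rw [RCLike.conj_mul, hε]; simp
  have h₀₀ : ⟪u₀, u₀⟫_ℂ = 1 := by rw [inner_self_eq_norm_sq_to_K, hu₀]; simp
  have h₁₁ : ⟪u₁, u₁⟫_ℂ = 1 := by rw [inner_self_eq_norm_sq_to_K, hu₁]; simp
  have h₁₀ : ⟪u₁, u₀⟫_ℂ = 0 := inner_eq_zero_symm.mp h₀₁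
  set w := s⁻¹ • (u₀ + ε • u₁)
  have hww : ⟪w, w⟫_ℂ = 1 := by
    simp only [w, inner_smul_left, inner_smul_right, inner_add_left, inner_add_right, h₀₀, h₁₁,
      h₀₁, h₁₀, map_inv₀, hsc]
    field_simp
    linear_combination hε' - hs
  have hwv : ⟪w, v⟫_ℂ = 1 := by
    simp only [w, inner_smul_left, inner_add_left, hc₀, hc₁, map_inv₀, hsc]
    field_simp
    linear_combination hε' - hs
  have hw : ‖w‖ = 1 := by
    have h := inner_self_eq_norm_sq (𝕜 := ℂ) w
    rw [hww, RCLike.one_re] at h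
    exact (pow_eq_one_iff_of_nonneg (norm_nonneg w) two_ne_zero).mp h.symm
  exact eq_of_norm_le_of_inner_eq (hv.trans hw.ge) (hwv.trans hww.symm)

theorem inner_add_smul_apply_apply_eq {T : E →L[ℂ] F →L[ℂ] G}
    (hT : ∀ x x' y y', ⟪T x y, T x' y'⟫_ℂ = ⟪x, x'⟫_ℂ * ⟪y, y'⟫_ℂ)
    (hdense : Dense (Submodule.span ℂ (Set.range fun p : E × F => T p.1 p.2) : Set G))
    {A : E ≃ₗᵢ[ℂ] E} {B : F ≃ₗᵢ[ℂ] F} {W : G →L[ℂ] G} (hW : ∀ x y, W (T x y) = T (A x) (B y))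
    {u₀ u₁ : G} (hu₀ : ‖u₀‖ = 1) (hu₁ : ‖u₁‖ = 1) (h₀₁ : ⟪u₀, u₁⟫_ℂ = 0) {ε : ℂ} (hε : ‖ε‖ = 1)
    (hc₀ : ⟪u₀, W u₀⟫_ℂ = (Real.sqrt 2 : ℂ)⁻¹) (hc₁ : ⟪u₁, W u₀⟫_ℂ = ε * (Real.sqrt 2 : ℂ)⁻¹)
    (x : E) (y : F) :
    ⟪u₀ + ε • u₁, T x y⟫_ℂ = Real.sqrt 2 * ⟪u₀, T (A.symm x) (B.symm y)⟫_ℂ := by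
  have hiso := inner_map_map_of_apply_apply_eq hT hdense (A := A.toLinearIsometry)
    (B := B.toLinearIsometry) hW
  have hWu₀ := eq_inv_sqrt_two_smul_add hu₀ hu₁ h₀₁
    (((LinearMap.norm_map_iff_inner_map_map W).mpr hiso u₀).trans hu₀).le hε hc₀ hc₁
  have hsum : u₀ + ε • u₁ = (Real.sqrt 2 : ℂ) • W u₀ := by
    rw [hWu₀, smul_smul, mul_inv_cancel₀ (by simp), one_smul]
  have h := hiso u₀ (T (A.symm x) (B.symm y))
  rw [hW, A.apply_symm_apply, B.apply_symm_apply] at h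
  rw [hsum, inner_smul_left, Complex.conj_ofReal, h]

theorem sqrt_two_mul_norm_innerForm_le [CompleteSpace E] [CompleteSpace F]
    {T : E →L[ℂ] F →L[ℂ] G} (hT : ∀ x x' y y', ⟪T x y, T x' y'⟫_ℂ = ⟪x, x'⟫_ℂ * ⟪y, y'⟫_ℂ)
    (hdense : Dense (Submodule.span ℂ (Set.range fun p : E × F => T p.1 p.2) : Set G))
    (A : Fin 2 → (E ≃ₗᵢ[ℂ] E)) (B : Fin 2 → (F ≃ₗᵢ[ℂ] F)) (W : Fin 2 → Fin 2 → (G →L[ℂ] G))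
    (hW : ∀ j k x y, W j k (T x y) = T (A j x) (B k y)) {u₀ u₁ : G} (hu₀ : ‖u₀‖ = 1)
    (hu₁ : ‖u₁‖ = 1) (h₀₁ : ⟪u₀, u₁⟫_ℂ = 0)
    (hc₀ : ∀ j k, ⟪u₀, W j k u₀⟫_ℂ = (Real.sqrt 2 : ℂ)⁻¹)
    (hc₁ : ∀ j k : Fin 2,
      ⟪u₁, W j k u₀⟫_ℂ = (-1 : ℂ) ^ ((j : ℤ) - (k : ℤ)) * (Real.sqrt 2 : ℂ)⁻¹) :
    Real.sqrt 2 * ‖innerForm T u₀‖ ≤ max ‖innerForm T u₀‖ ‖innerForm T u₁‖ := by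
  set p := innerForm T u₀
  set q := innerForm T u₁
  have hcorr (j k : Fin 2) (x : E) (y : F) : p x y + (-1 : ℂ) ^ ((j : ℤ) - (k : ℤ)) * q x y =
      Real.sqrt 2 * p ((A j).symm x) ((B k).symm y) := by
    have h := inner_add_smul_apply_apply_eq hT hdense (hW j k) hu₀ hu₁ h₀₁ (by simp) (hc₀ j k)
      (hc₁ j k) x y
    rwa [inner_add_left, inner_smul_left, map_zpow₀, map_neg, map_one] at h
  have h₀₀ (x : E) (y : F) : p x y + q x y = Real.sqrt 2 * p ((A 0).symm x) ((B 0).symm y) := by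
    simpa using hcorr 0 0 x y
  have h₁₀ (x : E) (y : F) : p x y - q x y = Real.sqrt 2 * p ((A 1).symm x) ((B 0).symm y) := by
    simpa [sub_eq_add_neg] using hcorr 1 0 x y
  have h₀₁ (x : E) (y : F) : p x y - q x y = Real.sqrt 2 * p ((A 0).symm x) ((B 1).symm y) := by
    simpa [sub_eq_add_neg] using hcorr 0 1 x y
  have h₁₁ (x : E) (y : F) : p x y + q x y = Real.sqrt 2 * p ((A 1).symm x) ((B 1).symm y) := by
    simpa using hcorr 1 1 x y
  set X := (A 0).symm.trans (A 1)
  set Y := (B 0).symm.trans (B 1)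
  have hX (x : E) (y : F) : p (X x) y = p x y ∧ q (X x) y = -q x y := by
    have e₁₀ := h₁₀ (X x) y
    have e₁₁ := h₁₁ (X x) y
    simp only [X, LinearIsometryEquiv.trans_apply, LinearIsometryEquiv.symm_apply_apply]
      at e₁₀ e₁₁ ⊢
    constructor
    · linear_combination (e₁₀ + e₁₁ - h₀₀ x y - h₀₁ x y) / 2
    · linear_combination (e₁₁ - e₁₀ + h₀₀ x y - h₀₁ x y) / 2
  have hY (x : E) (y : F) : p x (Y y) = p x y ∧ q x (Y y) = -q x y := by
    have e₀₁ := h₀₁ x (Y y)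
    have e₁₁ := h₁₁ x (Y y)
    simp only [Y, LinearIsometryEquiv.trans_apply, LinearIsometryEquiv.symm_apply_apply]
      at e₀₁ e₁₁ ⊢
    constructor
    · linear_combination (e₀₁ + e₁₁ - h₀₀ x y - h₁₀ x y) / 2
    · linear_combination (e₁₁ - e₀₁ + h₀₀ x y - h₁₀ x y) / 2
  have hp := apply_starProjection_apply_starProjection p X Y norm_one
    (fun x y => by rw [one_mul, (hX x y).1]) (fun x y => by rw [one_mul, (hY x y).1])
  have hq := apply_starProjection_apply_starProjection q X Y (c := -1) (by simp)
    (fun x y => by rw [neg_one_mul, (hX x y).2]) (fun x y => by rw [neg_one_mul, (hY x y).2])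
  have hpq : ‖p‖ ≤ ‖(Real.sqrt 2 : ℂ)⁻¹‖ * ‖p + q‖ :=
    norm_le_norm_mul_of_apply_eq_smul p (p + q) (A 0).toLinearIsometry (B 0).toLinearIsometry _
      fun x y => by
        have h := h₀₀ (A 0 x) (B 0 y)
        simp only [LinearIsometryEquiv.symm_apply_apply] at h
        simp only [smul_eq_mul, add_apply, LinearIsometryEquiv.coe_toLinearIsometry, h]
        field_simp
  rw [norm_inv, Complex.norm_real, Real.norm_of_nonneg (Real.sqrt_nonneg 2)] at hpq
  calc Real.sqrt 2 * ‖p‖ ≤ ‖p + q‖ := (le_inv_mul_iff₀ (by positivity)).mp hpq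
    _ ≤ max ‖p‖ ‖q‖ := norm_add_le_max_of_isOrtho p q
        (isOrtho_closedEigenspace X norm_one (by norm_num))
        (isOrtho_closedEigenspace Y norm_one (by norm_num)) hp hq

end Correlation

theorem eq_zero_of_mul_le_max {c a b : ℝ} (hc : 1 < c) (ha : 0 ≤ a) (h₁ : c * a ≤ max a b)
    (h₂ : c * b ≤ max a b) : a = 0 := by
  rcases le_total a b with h | h <;> simp only [max_eq_right, max_eq_left, h] at h₁ h₂ <;> nlinarith

theorem statement12_general {HA HB K : Type*}
    [NormedAddCommGroup HA] [InnerProductSpace ℂ HA] [CompleteSpace HA]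
    [NormedAddCommGroup HB] [InnerProductSpace ℂ HB] [CompleteSpace HB]
    [NormedAddCommGroup K] [InnerProductSpace ℂ K]
    (t : HA →ₗ[ℂ] HB →ₗ[ℂ] K)
    (ht : ∀ (x x' : HA) (y y' : HB),
      ⟪t x y, t x' y'⟫_ℂ = ⟪x, x'⟫_ℂ * ⟪y, y'⟫_ℂ)
    (hspan : (Submodule.span ℂ
        (Set.range fun p : HA × HB => t p.1 p.2)).topologicalClosure = ⊤) :
    ¬ ∃ (a : Fin 2 → Fin 2 → (HA ≃ₗᵢ[ℂ] HA)) (b : Fin 2 → Fin 2 → (HB ≃ₗᵢ[ℂ] HB))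
        (W : Fin 2 → Fin 2 → Fin 2 → (K →L[ℂ] K)) (h0 h1 : K),
      (∀ (j k l : Fin 2) (x : HA) (y : HB), W j k l (t x y) = t (a j l x) (b k l y)) ∧
      ‖h0‖ = 1 ∧ ‖h1‖ = 1 ∧ ⟪h0, h1⟫_ℂ = 0 ∧
      ∀ j k : Fin 2,
        ⟪h0, W j k 0 h0⟫_ℂ = (Real.sqrt 2 : ℂ)⁻¹ ∧
        ⟪h1, W j k 0 h0⟫_ℂ = (-1 : ℂ) ^ ((j : ℤ) - (k : ℤ)) * (Real.sqrt 2 : ℂ)⁻¹ ∧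
        ⟪h1, W j k 1 h1⟫_ℂ = (Real.sqrt 2 : ℂ)⁻¹ ∧
        ⟪h0, W j k 1 h1⟫_ℂ = (-1 : ℂ) ^ ((j : ℤ) - (k : ℤ)) * (Real.sqrt 2 : ℂ)⁻¹ := by
  rintro ⟨a, b, W, h₀, h₁, hW, hh₀, hh₁, h₀₁, hcorr⟩
  have hnorm := norm_apply_apply_of_inner_self fun x y => ht x x y y
  let T : HA →L[ℂ] HB →L[ℂ] K := t.mkContinuous₂ 1 fun x y => by rw [hnorm, one_mul]
  have hdense : Dense (Submodule.span ℂ (Set.range fun p : HA × HB => T p.1 p.2) : Set K) :=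
    Submodule.dense_iff_topologicalClosure_eq_top.mpr hspan
  have H₀ := sqrt_two_mul_norm_innerForm_le ht hdense (a · 0) (b · 0) (W · · 0) (hW · · 0)
    hh₀ hh₁ h₀₁ (fun j k => (hcorr j k).1) (fun j k => (hcorr j k).2.1)
  have H₁ := sqrt_two_mul_norm_innerForm_le ht hdense (a · 1) (b · 1) (W · · 1) (hW · · 1)
    hh₁ hh₀ (inner_eq_zero_symm.mp h₀₁) (fun j k => (hcorr j k).2.2.1)
    (fun j k => (hcorr j k).2.2.2)
  rw [max_comm] at H₁
  have hzero : innerForm T h₀ = 0 :=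
    (ContinuousLinearMap.opNorm_zero_iff _).mp
      (eq_zero_of_mul_le_max Real.one_lt_sqrt_two (ContinuousLinearMap.opNorm_nonneg _) H₀ H₁)
  simp [eq_zero_of_innerForm_eq_zero hdense hzero] at hh₀

/-- Theorem 3.2: with K a Hilbert space tensor product of Hilbert spaces H_A and H_B
(witnessed by the bilinear map t with ⟨t(x,y),t(x',y')⟩ = ⟨x,x'⟩⟨y,y'⟩ and total
range), there are no unitaries a_{j,l} on H_A, b_{k,l} on H_B, operators W_{j,k,l}
representing a_{j,l} ⊗ b_{k,l}, and orthonormal h₀, h₁ ∈ K realizing the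
correlations ⟨h₀, W_{j,k,0}h₀⟩ = 1/√2, ⟨h₁, W_{j,k,0}h₀⟩ = (−1)^{j−k}/√2,
⟨h₁, W_{j,k,1}h₁⟩ = 1/√2, ⟨h₀, W_{j,k,1}h₁⟩ = (−1)^{j−k}/√2. -/
theorem statement12 {HA HB K : Type*}
    [NormedAddCommGroup HA] [InnerProductSpace ℂ HA] [CompleteSpace HA]
    [NormedAddCommGroup HB] [InnerProductSpace ℂ HB] [CompleteSpace HB]
    [NormedAddCommGroup K] [InnerProductSpace ℂ K] [CompleteSpace K]
    (t : HA →ₗ[ℂ] HB →ₗ[ℂ] K)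
    (ht : ∀ (x x' : HA) (y y' : HB),
      ⟪t x y, t x' y'⟫_ℂ = ⟪x, x'⟫_ℂ * ⟪y, y'⟫_ℂ)
    (hspan : (Submodule.span ℂ
        (Set.range fun p : HA × HB => t p.1 p.2)).topologicalClosure = ⊤) :
    ¬ ∃ (a : Fin 2 → Fin 2 → (HA ≃ₗᵢ[ℂ] HA)) (b : Fin 2 → Fin 2 → (HB ≃ₗᵢ[ℂ] HB))
        (W : Fin 2 → Fin 2 → Fin 2 → (K →L[ℂ] K)) (h0 h1 : K),
      (∀ (j k l : Fin 2) (x : HA) (y : HB), W j k l (t x y) = t (a j l x) (b k l y)) ∧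
      ‖h0‖ = 1 ∧ ‖h1‖ = 1 ∧ ⟪h0, h1⟫_ℂ = 0 ∧
      ∀ j k : Fin 2,
        ⟪h0, W j k 0 h0⟫_ℂ = (Real.sqrt 2 : ℂ)⁻¹ ∧
        ⟪h1, W j k 0 h0⟫_ℂ = (-1 : ℂ) ^ ((j : ℤ) - (k : ℤ)) * (Real.sqrt 2 : ℂ)⁻¹ ∧
        ⟪h1, W j k 1 h1⟫_ℂ = (Real.sqrt 2 : ℂ)⁻¹ ∧
        ⟪h0, W j k 1 h1⟫_ℂ = (-1 : ℂ) ^ ((j : ℤ) - (k : ℤ)) * (Real.sqrt 2 : ℂ)⁻¹ :=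
  statement12_general t ht hspan
end

section
/- Let G = (ℤ/2ℤ) ∗ (ℤ/2ℤ) ∗ (ℤ/2ℤ) ∗ (ℤ/2ℤ) be the free product of four cyclic groups of order 2, with σ_0, σ_1, σ_2, σ_3 denoting the images in G of the nontrivial elements of the four factors. Then there is an injective group homomorphism from (ℤ/2ℤ) ∗ (ℤ/2ℤ) ∗ ℤ into G sending the nontrivial elements of the two ℤ/2ℤ factors to σ_0 and σ_1 respectively, and the generator of ℤ to σ_2σ_3. -/
/-!
Ping-pong on reduced words of `H ∗ H ∗ H ∗ H`. The words whose first letter lies in factor 0, in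
factor 1, or in factor 2 or 3 form three disjoint sets. A nontrivial letter of factor 0 (or 1)
sends every word not starting in that factor into the first (second) set, and a nonzero power of
`of a * of b` (with `a`, `b` in factors 2 and 3) prepends an alternating string of letters from
factors 2 and 3, so it sends words starting in factor 0 or 1 into the third set. The ping-pong
lemma then makes `H ∗ H ∗ ℤ → H ∗ H ∗ H ∗ H` injective.
-/

open Monoid CoprodI Function
open scoped Monoid.Coprod

namespace Monoid.CoprodI.Word

variable {ι : Type*} [DecidableEq ι]

theorem fstIdx_of_smul {M : ι → Type*} [∀ i, Monoid (M i)] [∀ i, DecidableEq (M i)]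
    {i : ι} {m : M i} (hm : m ≠ 1) {w : Word M} (hw : w.fstIdx ≠ some i) :
    (of m • w).fstIdx = some i := by
  rw [← cons_eq_smul (h1 := hw) (h2 := hm)]
  exact fstIdx_cons _ _ _ _

variable {G : ι → Type*} [∀ i, Group (G i)] [∀ i, DecidableEq (G i)]
  {i j : ι} {a : G i} {b : G j}

theorem fstIdx_pow_smul (hij : i ≠ j) (ha : a ≠ 1) (hb : b ≠ 1) {w : Word G}
    (hw : w.fstIdx ≠ some j) (n : ℕ) : ((of a * of b) ^ (n + 1) • w).fstIdx = some i := by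
  have step : ∀ v : Word G, v.fstIdx ≠ some j → ((of a * of b) • v).fstIdx = some i :=
    fun v hv => by
      rw [mul_smul, fstIdx_of_smul ha]
      rw [fstIdx_of_smul hb hv]
      exact Option.some_injective _ |>.ne hij.symm
  induction n with
  | zero => simpa using step w hw
  | succ n ih =>
    rw [pow_succ', mul_smul]
    exact step _ (by rw [ih]; exact Option.some_injective _ |>.ne hij)

theorem fstIdx_zpow_smul (hij : i ≠ j) (ha : a ≠ 1) (hb : b ≠ 1) {w : Word G}
    (hwi : w.fstIdx ≠ some i) (hwj : w.fstIdx ≠ some j) {n : ℤ} (hn : n ≠ 0) :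
    ((of a * of b) ^ n • w).fstIdx = some i ∨ ((of a * of b) ^ n • w).fstIdx = some j := by
  obtain ⟨k, rfl | rfl⟩ : ∃ k : ℕ, n = (k + 1 : ℕ) ∨ n = Int.negSucc k := by
    rcases n with (_ | k) | k
    · exact absurd rfl hn
    · exact ⟨k, Or.inl rfl⟩
    · exact ⟨k, Or.inr rfl⟩
  · left
    rw [zpow_natCast]
    exact fstIdx_pow_smul hij ha hb hwj k
  · right
    rw [zpow_negSucc, ← inv_pow, mul_inv_rev, ← map_inv, ← map_inv]
    exact fstIdx_pow_smul hij.symm (inv_ne_one.2 hb) (inv_ne_one.2 ha) hwi k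

end Monoid.CoprodI.Word

universe u

def tripleFamily (A B C : Type u) : Fin 3 → Type u
  | 0 => A
  | 1 => B
  | 2 => C

section Triple

variable {A B C : Type u} [Group A] [Group B] [Group C]

instance : ∀ i, Group (tripleFamily A B C i)
  | 0 => ‹Group A›
  | 1 => ‹Group B›
  | 2 => ‹Group C›

def tripleHom {N : Type*} [Monoid N] (fA : A →* N) (fB : B →* N) (fC : C →* N) :
    ∀ i, tripleFamily A B C i →* N
  | 0 => fA
  | 1 => fB
  | 2 => fC

def coprodToCoprodI : A ∗ (B ∗ C) →* CoprodI (tripleFamily A B C) :=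
  Coprod.lift (of (M := tripleFamily A B C) (i := 0))
    (Coprod.lift (of (M := tripleFamily A B C) (i := 1)) (of (M := tripleFamily A B C) (i := 2)))

theorem lift_comp_coprodToCoprodI {N : Type*} [Monoid N] (fA : A →* N) (fB : B →* N)
    (fC : C →* N) :
    (CoprodI.lift (tripleHom fA fB fC)).comp coprodToCoprodI =
      Coprod.lift fA (Coprod.lift fB fC) := by
  refine Coprod.hom_ext ?_ (Coprod.hom_ext ?_ ?_) <;> ext x <;>
    exact lift_of _ _

theorem coprodToCoprodI_injective : Injective (coprodToCoprodI (A := A) (B := B) (C := C)) := by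
  refine LeftInverse.injective (g := CoprodI.lift (tripleHom Coprod.inl
    (Coprod.inr.comp Coprod.inl) (Coprod.inr.comp Coprod.inr))) fun x => ?_
  rw [← MonoidHom.comp_apply, lift_comp_coprodToCoprodI]
  have : Coprod.lift Coprod.inl (Coprod.lift (Coprod.inr.comp Coprod.inl)
      (Coprod.inr.comp Coprod.inr)) = MonoidHom.id (A ∗ (B ∗ C)) :=
    Coprod.hom_ext rfl (Coprod.hom_ext rfl rfl)
  rw [this, MonoidHom.id_apply]

end Triple

section PingPong

variable {H : Type} [Group H]

def pingPongBlock : Fin 4 → Fin 3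
  | 0 => 0
  | 1 => 1
  | 2 => 2
  | 3 => 2

def pingPongSet (i : Fin 3) : Set (Word fun _ : Fin 4 => H) :=
  {w | ∃ k, w.fstIdx = some k ∧ pingPongBlock k = i}

theorem pingPongSet_pairwise_disjoint : Pairwise (Disjoint on pingPongSet (H := H)) := by
  rintro i j hij
  refine Set.disjoint_left.2 ?_
  rintro w ⟨k, hk, rfl⟩ ⟨k', hk', rfl⟩
  exact hij (congrArg pingPongBlock (Option.some_injective _ (hk.symm.trans hk')))

theorem fstIdx_ne_of_mem_pingPongSet {i j : Fin 3} (hij : i ≠ j) {w : Word fun _ : Fin 4 => H}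
    (hw : w ∈ pingPongSet j) {k : Fin 4} (hk : pingPongBlock k = i) : w.fstIdx ≠ some k := by
  obtain ⟨k', hk', rfl⟩ := hw
  rintro hk''
  exact hij (hk ▸ congrArg pingPongBlock (Option.some_injective _ (hk''.symm.trans hk')))

theorem lift_tripleHom_injective {a b : H} (ha : a ≠ 1) (hb : b ≠ 1) :
    Injective (CoprodI.lift (tripleHom (of (M := fun _ : Fin 4 => H) (i := 0)) (of (i := 1))
      (zpowersHom (CoprodI fun _ : Fin 4 => H) (of (i := 2) a * of (i := 3) b)))) := by
  classical
  refine lift_injective_of_ping_pong _ (Or.inl (by simp)) (pingPongSet (H := H)) (fun i => ?_)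
    pingPongSet_pairwise_disjoint ?_
  · refine ⟨of (M := fun _ : Fin 4 => H) (i := i.castSucc) a • Word.empty, i.castSucc, ?_,
      by fin_cases i <;> rfl⟩
    exact Word.fstIdx_of_smul ha (by simp [Word.fstIdx, Word.empty])
  intro i j hij h hh
  rintro _ ⟨w, hw, rfl⟩
  match i, h, hh with
  | 0, (h : H), hh =>
    exact ⟨0, Word.fstIdx_of_smul (M := fun _ : Fin 4 => H) (i := 0) (m := h) hh
      (fstIdx_ne_of_mem_pingPongSet hij hw rfl), rfl⟩
  | 1, (h : H), hh =>
    exact ⟨1, Word.fstIdx_of_smul (M := fun _ : Fin 4 => H) (i := 1) (m := h) hh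
      (fstIdx_ne_of_mem_pingPongSet hij hw rfl), rfl⟩
  | 2, (n : Multiplicative ℤ), hn =>
    rcases Word.fstIdx_zpow_smul (i := 2) (j := 3) (by decide) ha hb
      (fstIdx_ne_of_mem_pingPongSet hij hw rfl) (fstIdx_ne_of_mem_pingPongSet hij hw rfl)
      (fun h0 => hn (toAdd_eq_zero.1 h0)) with h | h
    · exact ⟨2, h, rfl⟩
    · exact ⟨3, h, rfl⟩

theorem lift_of_of_zpowersHom_injective {a b : H} (ha : a ≠ 1) (hb : b ≠ 1) :
    Injective (Coprod.lift (of (M := fun _ : Fin 4 => H) (i := 0)) (Coprod.lift (of (i := 1))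
      (zpowersHom (CoprodI fun _ : Fin 4 => H) (of (i := 2) a * of (i := 3) b)))) := by
  rw [← lift_comp_coprodToCoprodI]
  exact (lift_tripleHom_injective ha hb).comp coprodToCoprodI_injective

end PingPong

/-- There is an injective group homomorphism from ℤ/2 ∗ ℤ/2 ∗ ℤ into the free
product G = ℤ/2 ∗ ℤ/2 ∗ ℤ/2 ∗ ℤ/2 (with σᵢ the images in G of the nontrivial
elements of the four factors), sending the nontrivial elements of the two ℤ/2
factors to σ₀ and σ₁, and the generator of ℤ to σ₂σ₃. -/
theorem statement15 :
    ∃ f : Monoid.Coprod (Multiplicative (ZMod 2))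
        (Monoid.Coprod (Multiplicative (ZMod 2)) (Multiplicative ℤ)) →*
        Monoid.CoprodI (fun _ : Fin 4 => Multiplicative (ZMod 2)),
      Function.Injective f ∧
      f (Monoid.Coprod.inl (Multiplicative.ofAdd (1 : ZMod 2))) =
        Monoid.CoprodI.of (M := fun _ : Fin 4 => Multiplicative (ZMod 2)) (i := 0)
          (Multiplicative.ofAdd (1 : ZMod 2)) ∧
      f (Monoid.Coprod.inr (Monoid.Coprod.inl (Multiplicative.ofAdd (1 : ZMod 2)))) =
        Monoid.CoprodI.of (M := fun _ : Fin 4 => Multiplicative (ZMod 2)) (i := 1)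
          (Multiplicative.ofAdd (1 : ZMod 2)) ∧
      f (Monoid.Coprod.inr (Monoid.Coprod.inr (Multiplicative.ofAdd (1 : ℤ)))) =
        Monoid.CoprodI.of (M := fun _ : Fin 4 => Multiplicative (ZMod 2)) (i := 2)
            (Multiplicative.ofAdd (1 : ZMod 2)) *
          Monoid.CoprodI.of (M := fun _ : Fin 4 => Multiplicative (ZMod 2)) (i := 3)
            (Multiplicative.ofAdd (1 : ZMod 2)) := by
  have hσ : Multiplicative.ofAdd (1 : ZMod 2) ≠ 1 := by decide
  exact ⟨_, lift_of_of_zpowersHom_injective hσ hσ, rfl, rfl, by simp⟩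
end

section
/- Let a and b denote the images in (ℤ/3ℤ) ∗ (ℤ/3ℤ) of fixed generators of the two cyclic factors of order 3. Then the group homomorphism from the free group F_3 on three generators to (ℤ/3ℤ) ∗ (ℤ/3ℤ) sending the three generators to aba, bab, and a b² a² b respectively is injective; that is, the elements aba, bab, a b² a² b generate a free subgroup of rank 3. -/
/-!
Ping-pong on reduced words. Pass to the indexed free product over `Bool`, which acts on its reduced
words. Let `X₀, X₁, X₂` be the reduced words beginning with `ab`, `b`, `ab²` and `Y₀, Y₁, Y₂` those
beginning with `a²`, `b²a²`, `b²a`, the beginnings of `aba`, `bab`, `ab²a²b` and of their inverses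
`a²b²a²`, `b²a²b²`, `b²aba²`. No one of these six prefixes is a prefix of another, so the sets are
pairwise disjoint, and left multiplication by the `i`-th element (resp. its inverse) maps the
complement of `Yᵢ` into `Xᵢ` (resp. of `Xᵢ` into `Yᵢ`): cancellation only reaches the second letter
of the word, and the words where it would destroy the prefix are exactly the excluded ones. The
ping-pong lemma for free groups concludes.
-/

noncomputable section

/-- a, the image in ℤ/3 ∗ ℤ/3 of a fixed generator of the first factor. -/
def genA : Monoid.Coprod (Multiplicative (ZMod 3)) (Multiplicative (ZMod 3)) :=
  Monoid.Coprod.inl (Multiplicative.ofAdd (1 : ZMod 3))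

/-- b, the image in ℤ/3 ∗ ℤ/3 of a fixed generator of the second factor. -/
def genB : Monoid.Coprod (Multiplicative (ZMod 3)) (Multiplicative (ZMod 3)) :=
  Monoid.Coprod.inr (Multiplicative.ofAdd (1 : ZMod 3))

open Monoid CoprodI

namespace Monoid.CoprodI

variable {ι G : Type*} [Group G]

def ofList (p : List (Σ _ : ι, G)) : CoprodI fun _ : ι => G :=
  (p.map fun x => of (i := x.1) x.2).prod

def invLetters (p : List (Σ _ : ι, G)) : List (Σ _ : ι, G) :=
  p.reverse.map fun x => ⟨x.1, x.2⁻¹⟩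

theorem inv_ofList (p : List (Σ _ : ι, G)) : (ofList p)⁻¹ = ofList (invLetters p) := by
  simp [ofList, invLetters, List.prod_inv_reverse, List.map_reverse, Function.comp_def]

variable [DecidableEq ι] [DecidableEq G]

namespace Word

def consMul (i : ι) (g : G) : List (Σ _ : ι, G) → List (Σ _ : ι, G)
  | [] => [⟨i, g⟩]
  | ⟨j, h⟩ :: t =>
    if j = i then (if g * h = 1 then t else ⟨i, g * h⟩ :: t) else ⟨i, g⟩ :: ⟨j, h⟩ :: t

def listMul (p l : List (Σ _ : ι, G)) : List (Σ _ : ι, G) :=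
  p.foldr (fun x l => consMul x.1 x.2 l) l

theorem toList_of_smul {i : ι} {g : G} (hg : g ≠ 1) (w : Word fun _ : ι => G) :
    (of (M := fun _ : ι => G) (i := i) g • w).toList = consMul i g w.toList := by
  induction w using consRecOn with
  | empty =>
    rw [of_smul_def, equivPair_eq_of_fstIdx_ne (by simp [fstIdx])]
    simp [rcons, hg, cons, consMul]
  | cons j h t h1 h2 ih =>
    by_cases hj : j = i
    · subst hj
      have hpair : equivPair j (cons h t h1 h2) = ⟨h, t, h1⟩ := by
        rw [cons_eq_smul, equivPair_smul_same, equivPair_eq_of_fstIdx_ne h1]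
        simp
      rw [of_smul_def, hpair]
      by_cases hgh : g * h = 1
      · simp [rcons, hgh, consMul]
      · simp [rcons, hgh, consMul, cons]
    · rw [of_smul_def, equivPair_eq_of_fstIdx_ne (by simp [fstIdx, cons, hj])]
      simp [rcons, hg, cons, consMul, hj]

theorem toList_ofList_smul {p : List (Σ _ : ι, G)} (hp : ∀ x ∈ p, x.2 ≠ 1)
    (w : Word fun _ : ι => G) : (ofList p • w).toList = listMul p w.toList := by
  induction p with
  | nil => simp [ofList, listMul]
  | cons x p ih =>
    rw [List.forall_mem_cons] at hp
    rw [ofList, List.map_cons, List.prod_cons, mul_smul, toList_of_smul hp.1, ← ofList, ih hp.2]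
    rfl

end Word

end Monoid.CoprodI

def Monoid.Coprod.toCoprodI {G : Type*} [Monoid G] : Coprod G G →* CoprodI fun _ : Bool => G :=
  Coprod.lift (of (M := fun _ : Bool => G) (i := false)) (of (M := fun _ : Bool => G) (i := true))

theorem disjoint_setOf_prefix {α : Type*} {p q : List α} (hpq : ¬p <+: q) (hqp : ¬q <+: p) :
    Disjoint {l | p <+: l} {l | q <+: l} :=
  Set.disjoint_left.mpr fun _ hp hq => (List.prefix_or_prefix_of_prefix hp hq).elim hpq hqp

namespace ZMod3Coprod

open Multiplicative Word Pointwise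

def ω : Multiplicative (ZMod 3) := ofAdd 1

theorem ω_ne_one : ω ≠ 1 := by decide
theorem ω_inv_ne_ω : ω⁻¹ ≠ ω := by decide
theorem ω_mul_ω : ω * ω = ω⁻¹ := by decide
theorem ω_inv_mul_ω_inv : ω⁻¹ * ω⁻¹ = ω := by decide
theorem ω_sq : ω ^ 2 = ω⁻¹ := by decide

theorem eq_one_or_ω_or_ω_inv (g : Multiplicative (ZMod 3)) : g = 1 ∨ g = ω ∨ g = ω⁻¹ := by
  revert g; decide

abbrev Letter := Σ _ : Bool, Multiplicative (ZMod 3)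

/-- The reduced words `aba`, `bab`, `ab²a²b`, with `a = ⟨false, ω⟩` and `b = ⟨true, ω⟩`. -/
def genLetters : Fin 3 → List Letter :=
  ![[⟨false, ω⟩, ⟨true, ω⟩, ⟨false, ω⟩], [⟨true, ω⟩, ⟨false, ω⟩, ⟨true, ω⟩],
    [⟨false, ω⟩, ⟨true, ω⁻¹⟩, ⟨false, ω⁻¹⟩, ⟨true, ω⟩]]

def prefixX : Fin 3 → List Letter :=
  ![[⟨false, ω⟩, ⟨true, ω⟩], [⟨true, ω⟩], [⟨false, ω⟩, ⟨true, ω⁻¹⟩]]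

def prefixY : Fin 3 → List Letter :=
  ![[⟨false, ω⁻¹⟩], [⟨true, ω⁻¹⟩, ⟨false, ω⁻¹⟩], [⟨true, ω⁻¹⟩, ⟨false, ω⟩]]

-- In both lemmas only the first two letters of `l` meet the generator, so they are finite checks.
theorem prefixX_prefix_listMul (i : Fin 3) {l : List Letter} (hne : ∀ x ∈ l, x.2 ≠ 1)
    (hchain : l.IsChain fun x y => x.1 ≠ y.1) (hl : ¬prefixY i <+: l) :
    prefixX i <+: listMul (genLetters i) l := by
  rcases l with _ | ⟨⟨_ | _, g₁⟩, _ | ⟨⟨_ | _, g₂⟩, t⟩⟩ <;>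
  (try obtain rfl | rfl | rfl := eq_one_or_ω_or_ω_inv g₁) <;>
  (try obtain rfl | rfl | rfl := eq_one_or_ω_or_ω_inv g₂) <;>
  fin_cases i <;>
  simp_all [listMul, consMul, genLetters, prefixX, prefixY, ω_mul_ω, ω_inv_mul_ω_inv, ω_ne_one,
    ω_inv_ne_ω, ω_inv_ne_ω.symm]

theorem prefixY_prefix_listMul (i : Fin 3) {l : List Letter} (hne : ∀ x ∈ l, x.2 ≠ 1)
    (hchain : l.IsChain fun x y => x.1 ≠ y.1) (hl : ¬prefixX i <+: l) :
    prefixY i <+: listMul (invLetters (genLetters i)) l := by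
  rcases l with _ | ⟨⟨_ | _, g₁⟩, _ | ⟨⟨_ | _, g₂⟩, t⟩⟩ <;>
  (try obtain rfl | rfl | rfl := eq_one_or_ω_or_ω_inv g₁) <;>
  (try obtain rfl | rfl | rfl := eq_one_or_ω_or_ω_inv g₂) <;>
  fin_cases i <;>
  simp_all [listMul, consMul, invLetters, genLetters, prefixX, prefixY, ω_mul_ω, ω_inv_mul_ω_inv,
    ω_ne_one, ω_inv_ne_ω, ω_inv_ne_ω.symm]

theorem toCoprodI_comp_lift :
    Coprod.toCoprodI.comp (FreeGroup.lift fun i : Fin 3 =>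
        if i = 0 then genA * genB * genA
        else if i = 1 then genB * genA * genB
        else genA * genB ^ 2 * genA ^ 2 * genB) =
      FreeGroup.lift fun i => ofList (genLetters i) := by
  refine FreeGroup.ext_hom _ _ fun i => ?_
  have hA : Coprod.toCoprodI genA = of (i := false) ω := Coprod.lift_apply_inl ..
  have hB : Coprod.toCoprodI genB = of (i := true) ω := Coprod.lift_apply_inr ..
  have hA2 : Coprod.toCoprodI (genA ^ 2) = of (i := false) ω⁻¹ := by
    rw [map_pow, hA, ← map_pow, ω_sq]
  have hB2 : Coprod.toCoprodI (genB ^ 2) = of (i := true) ω⁻¹ := by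
    rw [map_pow, hB, ← map_pow, ω_sq]
  fin_cases i <;> simp [hA, hB, hA2, hB2, ofList, genLetters, mul_assoc]

theorem injective_lift_ofList_genLetters :
    Function.Injective (FreeGroup.lift fun i => ofList (genLetters i)) := by
  let X i : Set (Word fun _ : Bool => Multiplicative (ZMod 3)) := {w | prefixX i <+: w.toList}
  let Y i : Set (Word fun _ : Bool => Multiplicative (ZMod 3)) := {w | prefixY i <+: w.toList}
  have hX i : ofList (genLetters i) • (Y i)ᶜ ⊆ X i := by
    rintro _ ⟨w, hw, rfl⟩
    rw [Set.mem_ofPred_eq, toList_ofList_smul (by fin_cases i <;> decide)]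
    exact prefixX_prefix_listMul i w.ne_one w.chain_ne hw
  have hY i : (ofList (genLetters i))⁻¹ • (X i)ᶜ ⊆ Y i := by
    rintro _ ⟨w, hw, rfl⟩
    rw [Set.mem_ofPred_eq, inv_ofList, toList_ofList_smul (by fin_cases i <;> decide)]
    exact prefixY_prefix_listMul i w.ne_one w.chain_ne hw
  have disjoint_of_incomparable {p q : List Letter} (hpq : ¬p <+: q) (hqp : ¬q <+: p) :
      Disjoint {w : Word fun _ : Bool => Multiplicative (ZMod 3) | p <+: w.toList}
        {w | q <+: w.toList} :=
    (disjoint_setOf_prefix hpq hqp).preimage Word.toList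
  refine FreeGroup.injective_lift_of_ping_pong _ X Y
    (fun i => ⟨_, hX i ⟨Word.empty, by fin_cases i <;> decide, rfl⟩⟩) ?_ ?_ ?_ hX hY
  · intro i j hij
    fin_cases i <;> fin_cases j <;>
      first | exact absurd rfl hij | exact disjoint_of_incomparable (by decide) (by decide)
  · intro i j hij
    fin_cases i <;> fin_cases j <;>
      first | exact absurd rfl hij | exact disjoint_of_incomparable (by decide) (by decide)
  · intro i j
    fin_cases i <;> fin_cases j <;> exact disjoint_of_incomparable (by decide) (by decide)

end ZMod3Coprod

open ZMod3Coprod in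
/-- The homomorphism F₃ → ℤ/3 ∗ ℤ/3 sending the three free generators to
aba, bab and ab²a²b is injective; i.e. these elements generate a free subgroup
of rank 3. -/
theorem statement17 :
    Function.Injective
      (FreeGroup.lift (fun i : Fin 3 =>
        if i = 0 then genA * genB * genA
        else if i = 1 then genB * genA * genB
        else genA * genB ^ 2 * genA ^ 2 * genB) :
      FreeGroup (Fin 3) →*
        Monoid.Coprod (Multiplicative (ZMod 3)) (Multiplicative (ZMod 3))) := by
  refine Function.Injective.of_comp (f := Coprod.toCoprodI) ?_
  rw [← MonoidHom.coe_comp, toCoprodI_comp_lift]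
  exact injective_lift_ofList_genLetters
end
end
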